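/- arXiv:1307.7113 — 5 statements merged into one kernel-verified Lean document; each statement's English description precedes it below -/
import Mathlib

section
/- The images of the matrices A = [[1,2],[0,1]] and B = [[1,0],[2,1]] in PSL₂(ℤ) freely generate the image of the principal congruence subgroup Γ(2); that is, the homomorphism from the free group on two generators to PSL₂(ℤ) sending the generators to the images of A and B is injective, and its range is exactly the image of Γ(2) in PSL₂(ℤ). -/
/-- `SL(2, ℤ)`. -/
abbrev SL2Z := Matrix.SpecialLinearGroup (Fin 2) ℤ

/-- `PSL₂(ℤ)`, the quotient of `SL(2, ℤ)` by its center `{±I}`. -/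
abbrev PSL2Z := SL2Z ⧸ Subgroup.center SL2Z

/-- The projection `SL(2, ℤ) → PSL₂(ℤ)`. -/
def projSL : SL2Z →* PSL2Z := QuotientGroup.mk' (Subgroup.center SL2Z)

/-- `Γ̄(N)`, the image of the principal congruence subgroup `Γ(N)` in `PSL₂(ℤ)`. -/
def GammaBar (N : ℕ) : Subgroup PSL2Z := (CongruenceSubgroup.Gamma N).map projSL

/-- The matrix `A = [[1,2],[0,1]]` in `SL(2, ℤ)`. -/
def matA : SL2Z := ⟨!![1, 2; 0, 1], by norm_num [Matrix.det_fin_two_of]⟩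

/-- The matrix `B = [[1,0],[2,1]]` in `SL(2, ℤ)`. -/
def matB : SL2Z := ⟨!![1, 0; 2, 1], by norm_num [Matrix.det_fin_two_of]⟩

/-- The matrix `T = [[1,1],[0,1]]` in `SL(2, ℤ)`. -/
def matT : SL2Z := ⟨!![1, 1; 0, 1], by norm_num [Matrix.det_fin_two_of]⟩

/-- The matrix `L = [[1,0],[1,1]]` in `SL(2, ℤ)`. -/
def matL : SL2Z := ⟨!![1, 0; 1, 1], by norm_num [Matrix.det_fin_two_of]⟩

/-- `Ā`, the image of `A` in `PSL₂(ℤ)`. -/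
def Abar : PSL2Z := projSL matA

/-- `B̄`, the image of `B` in `PSL₂(ℤ)`. -/
def Bbar : PSL2Z := projSL matB

/-!
Let `SL(2, ℤ)` act on the nonzero vectors of `ℤ²`. In terms of the slope `z = v₀ / v₁`, `A`
acts as `z ↦ z + 2` and `B` as `1/z ↦ 1/z + 2`, so a ping-pong argument with four disjoint
slope intervals shows that `A` and `B` generate a free subgroup of `SL(2, ℤ)`. Every word in `A`
and `B` has top-left entry `≡ 1 (mod 4)`, so this subgroup misses `-I` and maps isomorphically
to `PSL₂(ℤ)`. Finally, a Euclidean algorithm on the first column, multiplying on the left by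
powers of `A` and `B`, shows that `Γ(2)` is generated by `-I`, `A` and `B`.
-/

open Matrix.SpecialLinearGroup CongruenceSubgroup

def SubMulAction.nonzero (G M : Type*) [Group G] [AddMonoid M] [DistribMulAction G M] :
    SubMulAction G M where
  carrier := {v | v ≠ 0}
  smul_mem' g _ hv := (smul_ne_zero_iff_ne g).mpr hv

@[simp]
lemma SubMulAction.mem_nonzero {G M : Type*} [Group G] [AddMonoid M] [DistribMulAction G M]
    {v : M} : v ∈ SubMulAction.nonzero G M ↔ v ≠ 0 :=
  Iff.rfl

theorem Matrix.SpecialLinearGroup.transvection_zpow {ι F : Type*} [DecidableEq ι] [Fintype ι]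
    [CommRing F] {i j : ι} (hij : i ≠ j) (b : F) (k : ℤ) :
    transvection hij b ^ k = transvection hij (k • b) :=
  let f : Multiplicative F →* Matrix.SpecialLinearGroup ι F :=
    { toFun := fun x ↦ transvection hij x.toAdd
      map_one' := transvection_coeff_zero hij
      map_mul' := fun x y ↦ transvection_add hij x.toAdd y.toAdd }
  (map_zpow f (.ofAdd b) k).symm

lemma Matrix.SpecialLinearGroup.mul_apply_fin_two {R : Type*} [CommRing R]
    (A B : Matrix.SpecialLinearGroup (Fin 2) R) (i j : Fin 2) :
    (A * B) i j = A i 0 * B 0 j + A i 1 * B 1 j := by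
  simp [Matrix.mul_apply, Fin.sum_univ_two]

lemma sq_add_sq_pos_of_ne_zero {v : Fin 2 → ℤ} (hv : v ≠ 0) : 0 < v 0 ^ 2 + v 1 ^ 2 := by
  contrapose! hv
  have h₀ : v 0 ^ 2 = 0 := by nlinarith [sq_nonneg (v 0), sq_nonneg (v 1)]
  have h₁ : v 1 ^ 2 = 0 := by nlinarith [sq_nonneg (v 0), sq_nonneg (v 1)]
  exact funext <| Fin.forall_fin_two.2 ⟨pow_eq_zero_iff two_ne_zero |>.1 h₀,
    pow_eq_zero_iff two_ne_zero |>.1 h₁⟩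

lemma Int.exists_natAbs_add_two_mul_lt {x y : ℤ} (hy : y ≠ 0) (hxy : Odd (x + y)) :
    ∃ k : ℤ, (x + 2 * k * y).natAbs < y.natAbs := by
  wlog hy₀ : 0 < y generalizing y
  · obtain ⟨k, hk⟩ := this (neg_ne_zero.2 hy)
      (by simpa [sub_eq_add_neg, two_mul] using hxy.sub_even (even_two_mul y)) (by omega)
    exact ⟨-k, by rwa [show x + 2 * -k * y = x + 2 * k * -y by ring, ← Int.natAbs_neg y]⟩
  have hdiv := Int.mul_ediv_add_emod x (2 * y)
  have hr₀ := Int.emod_nonneg x (by omega : 2 * y ≠ 0)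
  have hr₁ := Int.emod_lt_of_pos x (by omega : 0 < 2 * y)
  have hpar := Int.emod_emod_of_dvd x (dvd_mul_right 2 y)
  rw [Int.odd_iff] at hxy
  generalize x / (2 * y) = q at hdiv
  generalize x % (2 * y) = r at hdiv hr₀ hr₁ hpar
  by_cases hr : r < y
  · exact ⟨-q, by rw [show x + 2 * -q * y = r by linear_combination -hdiv]; omega⟩
  · exact ⟨-q - 1, by rw [show x + 2 * (-q - 1) * y = r - 2 * y by linear_combination -hdiv]; omega⟩

lemma coe_matA_zpow (k : ℤ) : ↑(matA ^ k) = !![1, 2 * k; 0, 1] := by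
  have hA : matA = transvection (i := 0) (j := 1) (by decide) 2 := by
    ext i j; fin_cases i <;> fin_cases j <;> rfl
  rw [hA, transvection_zpow, transvection_coe]
  ext i j; fin_cases i <;> fin_cases j <;> simp [mul_comm]

lemma coe_matB_zpow (k : ℤ) : ↑(matB ^ k) = !![1, 0; 2 * k, 1] := by
  have hB : matB = transvection (i := 1) (j := 0) (by decide) 2 := by
    ext i j; fin_cases i <;> fin_cases j <;> rfl
  rw [hB, transvection_zpow, transvection_coe]
  ext i j; fin_cases i <;> fin_cases j <;> simp [mul_comm]

lemma matA_zpow_smul (k : ℤ) (v : Fin 2 → ℤ) : matA ^ k • v = ![v 0 + 2 * k * v 1, v 1] := by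
  rw [Matrix.SpecialLinearGroup.smul_def, coe_matA_zpow]
  ext i; fin_cases i <;> simp [Matrix.mulVec, dotProduct]

lemma matB_zpow_smul (k : ℤ) (v : Fin 2 → ℤ) : matB ^ k • v = ![v 0, 2 * k * v 0 + v 1] := by
  rw [Matrix.SpecialLinearGroup.smul_def, coe_matB_zpow]
  ext i; fin_cases i <;> simp [Matrix.mulVec, dotProduct]

/-- In terms of the slope `z = v 0 / v 1 ∈ ℚ ∪ {∞}`: `X 0 = {z > 1}` and `X 1 = {0 ≤ z ≤ 1}`. -/
def pingPongX : Fin 2 → Set (SubMulAction.nonzero SL2Z (Fin 2 → ℤ)) :=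
  ![{v | 0 < v.1 1 * (v.1 0 - v.1 1)}, {v | 0 ≤ v.1 0 * (v.1 1 - v.1 0)}]

/-- In terms of the slope `z = v 0 / v 1 ∈ ℚ ∪ {∞}`: `Y 0 = {z ≤ -1} ∪ {∞}` and
`Y 1 = {-1 < z < 0}`. -/
def pingPongY : Fin 2 → Set (SubMulAction.nonzero SL2Z (Fin 2 → ℤ)) :=
  ![{v | v.1 1 * (v.1 0 + v.1 1) ≤ 0}, {v | v.1 0 * (v.1 0 + v.1 1) < 0}]

lemma pairwise_disjoint_fin_two {α : Type*} [PartialOrder α] [OrderBot α] {s : Fin 2 → α} :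
    Pairwise (Function.onFun Disjoint s) ↔ Disjoint (s 0) (s 1) := by
  refine ⟨fun h ↦ h zero_ne_one, fun h i j hij ↦ ?_⟩
  fin_cases i <;> fin_cases j
  exacts [absurd rfl hij, h, h.symm, absurd rfl hij]

lemma injective_lift_matA_matB : Function.Injective (FreeGroup.lift ![matA, matB]) := by
  refine FreeGroup.injective_lift_of_ping_pong _ pingPongX pingPongY ?_
    (pairwise_disjoint_fin_two.2 ?_) (pairwise_disjoint_fin_two.2 ?_) ?_ ?_ ?_
  · intro i
    fin_cases i
    · exact ⟨⟨![2, 1], by simp⟩, by simp [pingPongX]⟩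
    · exact ⟨⟨![1, 2], by simp⟩, by simp [pingPongX]⟩
  · refine Set.disjoint_left.2 fun v h₁ h₂ ↦ ?_
    simp only [pingPongX, Matrix.cons_val_zero, Matrix.cons_val_one, Set.mem_ofPred_eq] at h₁ h₂
    nlinarith [sq_nonneg (v.1 0 - v.1 1)]
  · refine Set.disjoint_left.2 fun v h₁ h₂ ↦ ?_
    simp only [pingPongY, Matrix.cons_val_zero, Matrix.cons_val_one, Set.mem_ofPred_eq] at h₁ h₂
    nlinarith [sq_nonneg (v.1 0 + v.1 1)]
  · intro i j
    refine Set.disjoint_left.2 fun v h₁ h₂ ↦ ?_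
    fin_cases i <;> fin_cases j <;>
      simp only [pingPongX, pingPongY, Fin.zero_eta, Fin.mk_one, Matrix.cons_val_zero,
        Matrix.cons_val_one, Set.mem_ofPred_eq] at h₁ h₂ <;>
      nlinarith [sq_add_sq_pos_of_ne_zero v.2]
  all_goals
    intro i
    fin_cases i <;> rintro _ ⟨v, hv, rfl⟩ <;>
      simp only [pingPongX, pingPongY, Fin.zero_eta, Fin.mk_one, Matrix.cons_val_zero,
        Matrix.cons_val_one, Set.mem_compl_iff, Set.mem_ofPred_eq, not_le, not_lt, Pi.inv_apply,
        SetLike.val_smul] at hv ⊢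
  · rw [← zpow_one matA, matA_zpow_smul]
    simp only [Matrix.cons_val_zero, Matrix.cons_val_one, Matrix.cons_val_fin_one]
    linarith
  · rw [← zpow_one matB, matB_zpow_smul]
    simp only [Matrix.cons_val_zero, Matrix.cons_val_one, Matrix.cons_val_fin_one]
    linarith
  · rw [← zpow_neg_one, matA_zpow_smul]
    simp only [Matrix.cons_val_zero, Matrix.cons_val_one, Matrix.cons_val_fin_one]
    linarith
  · rw [← zpow_neg_one, matB_zpow_smul]
    simp only [Matrix.cons_val_zero, Matrix.cons_val_one, Matrix.cons_val_fin_one]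
    linarith

def gammaTwoOneModFour : Subgroup SL2Z where
  carrier := {M | M 0 0 ≡ 1 [ZMOD 4] ∧ Even (M 0 1) ∧ Even (M 1 0)}
  mul_mem' := by
    rintro M N ⟨ha, hb, hc⟩ ⟨ha', hb', hc'⟩
    simp only [Set.mem_ofPred_eq, mul_apply_fin_two]
    obtain ⟨t, ht⟩ := hb
    obtain ⟨u, hu⟩ := hc'
    refine ⟨?_, (hb'.mul_left _).add (Even.mul_right ⟨t, ht⟩ _),
      (hc.mul_right _).add (Even.mul_left ⟨u, hu⟩ _)⟩
    have hbc : M 0 1 * N 1 0 ≡ 0 [ZMOD 4] :=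
      Int.modEq_zero_iff_dvd.2 ⟨t * u, by rw [ht, hu]; ring⟩
    simpa using (ha.mul ha').add hbc
  one_mem' := by simp
  inv_mem' := by
    rintro M ⟨ha, hb, hc⟩
    rw [SL2_inv_expl]
    refine ⟨show M 1 1 ≡ 1 [ZMOD 4] from ?_, hb.neg, hc.neg⟩
    obtain ⟨s, hs⟩ := Int.modEq_iff_dvd.1 ha
    obtain ⟨t, ht⟩ := hb
    obtain ⟨u, hu⟩ := hc
    have hdet : M 0 0 * M 1 1 - M 0 1 * M 1 0 = 1 := by
      rw [← Matrix.det_fin_two]; exact M.det_coe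
    exact Int.modEq_iff_dvd.2 ⟨-(s * M 1 1) - t * u,
      by linear_combination -hdet - M 1 1 * hs - M 1 0 * ht - 2 * t * hu⟩

lemma range_lift_le_gammaTwoOneModFour :
    (FreeGroup.lift ![matA, matB]).range ≤ gammaTwoOneModFour := by
  refine FreeGroup.range_lift_le ?_
  rw [Matrix.range_cons_cons_empty, Set.insert_subset_iff, Set.singleton_subset_iff]
  exact ⟨⟨rfl, even_two, Even.zero⟩, ⟨rfl, Even.zero, even_two⟩⟩

lemma eq_one_of_mem_center_of_mem_gammaTwoOneModFour {M : SL2Z}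
    (hcen : M ∈ Subgroup.center SL2Z) (hM : M ∈ gammaTwoOneModFour) : M = 1 := by
  obtain ⟨r, hr, hrM⟩ := mem_center_iff.1 hcen
  rw [Fintype.card_fin, sq_eq_one_iff] at hr
  rcases hr with rfl | rfl
  · ext1
    rw [← hrM, map_one, coe_one]
  · have h : M 0 0 = -1 := by simp [← hrM]
    exact absurd (h ▸ hM.1) (by decide)

lemma mem_Gamma_two_iff {M : SL2Z} :
    M ∈ Gamma 2 ↔ Odd (M 0 0) ∧ Even (M 0 1) ∧ Even (M 1 0) ∧ Odd (M 1 1) := by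
  simp [Gamma_mem, ZMod.intCast_eq_one_iff_odd, ZMod.intCast_eq_zero_iff_even]

lemma mem_closure_of_mem_Gamma_two_of_apply_one_zero {M : SL2Z} (hM : M ∈ Gamma 2)
    (hc : M 1 0 = 0) : M ∈ Subgroup.closure {-1, matA, matB} := by
  obtain ⟨-, ⟨m, hm⟩, -, -⟩ := mem_Gamma_two_iff.1 hM
  rw [← two_mul] at hm
  have had : M 0 0 * M 1 1 = 1 := by
    have hdet := M.det_coe
    rwa [Matrix.det_fin_two, hc, mul_zero, sub_zero] at hdet
  have hA : matA ∈ Subgroup.closure {-1, matA, matB} := Subgroup.subset_closure (by simp)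
  have hneg : -1 ∈ Subgroup.closure {-1, matA, matB} :=
    Subgroup.subset_closure (Set.mem_insert _ _)
  rcases Int.eq_one_or_neg_one_of_mul_eq_one' had with ⟨ha, hd⟩ | ⟨ha, hd⟩
  · convert zpow_mem hA m using 1
    ext i j; fin_cases i <;> fin_cases j <;> simp [coe_matA_zpow, ha, hd, hc, hm]
  · convert mul_mem hneg (zpow_mem hA (-m)) using 1
    ext i j; fin_cases i <;> fin_cases j <;> simp [coe_matA_zpow, ha, hd, hc, hm]

lemma exists_mem_closure_natAbs_lt {M : SL2Z} (hM : M ∈ Gamma 2) (hc : M 1 0 ≠ 0) :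
    ∃ N ∈ Subgroup.closure {matA, matB}, ((N * M) 0 0).natAbs + ((N * M) 1 0).natAbs <
      (M 0 0).natAbs + (M 1 0).natAbs := by
  obtain ⟨ha, -, hc', -⟩ := mem_Gamma_two_iff.1 hM
  by_cases hlt : (M 1 0).natAbs < (M 0 0).natAbs
  · obtain ⟨k, hk⟩ := Int.exists_natAbs_add_two_mul_lt hc (ha.add_even hc')
    refine ⟨matA ^ k, zpow_mem (Subgroup.subset_closure (by simp)) k, ?_⟩
    simp only [mul_apply_fin_two, coe_matA_zpow, Matrix.of_apply, Matrix.cons_val',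
      Matrix.cons_val_zero, Matrix.cons_val_one, Matrix.cons_val_fin_one, one_mul, zero_mul]
    omega
  · obtain ⟨k, hk⟩ :=
      Int.exists_natAbs_add_two_mul_lt (by rintro h; simp [h] at ha) (hc'.add_odd ha)
    refine ⟨matB ^ k, zpow_mem (Subgroup.subset_closure (by simp)) k, ?_⟩
    simp only [mul_apply_fin_two, coe_matB_zpow, Matrix.of_apply, Matrix.cons_val',
      Matrix.cons_val_zero, Matrix.cons_val_one, Matrix.cons_val_fin_one, one_mul, zero_mul]
    omega

theorem Gamma_two_eq_closure : Gamma 2 = Subgroup.closure {-1, matA, matB} := by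
  have hgen : Subgroup.closure {-1, matA, matB} ≤ Gamma 2 := by
    refine (Subgroup.closure_le _).2 (Set.insert_subset ?_ (Set.pair_subset ?_ ?_)) <;>
      exact mem_Gamma_two_iff.2 (by decide)
  refine le_antisymm (fun M hM ↦ ?_) hgen
  induction hn : (M 0 0).natAbs + (M 1 0).natAbs using Nat.strong_induction_on generalizing M with
  | _ n ih =>
  by_cases hc : M 1 0 = 0
  · exact mem_closure_of_mem_Gamma_two_of_apply_one_zero hM hc
  · obtain ⟨N, hN, hlt⟩ := exists_mem_closure_natAbs_lt hM hc
    have hN' : N ∈ Subgroup.closure {-1, matA, matB} :=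
      Subgroup.closure_mono (Set.subset_insert _ _) hN
    have hNM := ih _ (hn ▸ hlt) _ (mul_mem (hgen hN') hM) rfl
    simpa using mul_mem (inv_mem hN') hNM

lemma projSL_neg_one : projSL (-1) = 1 :=
  (QuotientGroup.eq_one_iff _).2 <| mem_center_iff.2 ⟨-1, by norm_num, by simp⟩

lemma projSL_comp_lift :
    projSL.comp (FreeGroup.lift ![matA, matB]) = FreeGroup.lift ![Abar, Bbar] := by
  ext i; fin_cases i <;> rfl

/-- `Ā` and `B̄` freely generate `Γ̄(2)`: the homomorphism from the free group on two
generators sending them to `Ā` and `B̄` is injective with range exactly `Γ̄(2)`. -/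
theorem gammaBar_two_free :
    Function.Injective (FreeGroup.lift ![Abar, Bbar]) ∧
      (FreeGroup.lift ![Abar, Bbar]).range = GammaBar 2 := by
  rw [← projSL_comp_lift]
  refine ⟨(injective_iff_map_eq_one _).2 fun w hw ↦ ?_, ?_⟩
  · have hcen : FreeGroup.lift ![matA, matB] w ∈ Subgroup.center SL2Z := by
      rwa [← QuotientGroup.ker_mk' (Subgroup.center SL2Z)]
    exact (injective_iff_map_eq_one _).1 injective_lift_matA_matB w <|
      eq_one_of_mem_center_of_mem_gammaTwoOneModFour hcen
        (range_lift_le_gammaTwoOneModFour ⟨w, rfl⟩)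
  · rw [GammaBar, Gamma_two_eq_closure, MonoidHom.map_closure, ← MonoidHom.map_range,
      FreeGroup.range_lift_eq_closure, MonoidHom.map_closure, Matrix.range_cons_cons_empty,
      Set.image_insert_eq (a := -1), projSL_neg_one, Subgroup.closure_insert_one]
end

section
/- Let Γ be a finite-index congruence subgroup of PSL₂(ℤ) of level m, i.e., m is the smallest positive integer with Γ̄(m) ≤ Γ. Let d be the least positive integer such that T^d ∈ Γ, where T is the image of [[1,1],[0,1]] (the width of the cusp ∞), and let e be the least positive integer such that L^e ∈ Γ, where L is the image of [[1,0],[1,1]] (the width of the cusp 0). Then m divides d·e. -/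
/-! Write `g = gcd(m, de)`, `U(x) = [[1, x], [0, 1]]` and `L(y) = [[1, 0], [y, 1]]`. By
minimality of `m` it suffices to show `Γ̄(g) ≤ Γ`, since then `m = g ∣ de`. Let `H` be the image
of `Γ` in `SL₂(ℤ/m)`; as `Γ ⊇ Γ̄(m)`, the preimage of `Γ` in `SL₂(ℤ)` is the full preimage of
`H`, and `H` contains all `U(dr)` and `L(er)`. Since `g` and `de` generate the same ideal of
`ℤ/m`, an element of `Γ(g)` reduces to `[[a, b], [c, *]]` with `a ≡ 1`, `b ≡ c ≡ 0 mod de`.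
Left multiplication by a suitable `U(dx)` makes `a` a unit (no prime divides `m`, `a` and `dc`:
it would divide `d`, hence `g` and `a - 1`, or `c`, contradicting `det = 1`). Then
`[[a, b], [c, *]] = L(c/a) · diag(a, a⁻¹) · U(b/a)` and, for `a = 1 + deα`,
`diag(a, a⁻¹) = U(d) L(eα) U(-d/a) L(-eαa)`, a product of generators of `H`. -/

open scoped MatrixGroups

namespace SL2

variable {R : Type*} [CommRing R]

def upper (x : R) : SL(2, R) := ⟨!![1, x; 0, 1], by simp [Matrix.det_fin_two_of]⟩

def lower (x : R) : SL(2, R) := ⟨!![1, 0; x, 1], by simp [Matrix.det_fin_two_of]⟩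

def diagUnit (u : Rˣ) : SL(2, R) := ⟨!![(u : R), 0; 0, ↑u⁻¹], by simp [Matrix.det_fin_two_of]⟩

@[simp] lemma coe_upper (x : R) : (upper x : Matrix (Fin 2) (Fin 2) R) = !![1, x; 0, 1] := rfl

@[simp] lemma coe_lower (x : R) : (lower x : Matrix (Fin 2) (Fin 2) R) = !![1, 0; x, 1] := rfl

@[simp] lemma coe_diagUnit (u : Rˣ) :
    (diagUnit u : Matrix (Fin 2) (Fin 2) R) = !![(u : R), 0; 0, ↑u⁻¹] := rfl

@[simp] lemma upper_zero : upper (0 : R) = 1 := by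
  ext i j; fin_cases i <;> fin_cases j <;> simp

lemma upper_add (x y : R) : upper (x + y) = upper x * upper y := by
  ext i j; fin_cases i <;> fin_cases j <;> simp [Matrix.mul_apply, Fin.sum_univ_two, add_comm]

lemma upper_nsmul (n : ℕ) (x : R) : upper (n • x) = upper x ^ n := by
  induction n with
  | zero => simp
  | succ n ih => rw [succ_nsmul, upper_add, ih, pow_succ]

@[simp] lemma lower_zero : lower (0 : R) = 1 := by
  ext i j; fin_cases i <;> fin_cases j <;> simp

lemma lower_add (x y : R) : lower (x + y) = lower x * lower y := by
  ext i j; fin_cases i <;> fin_cases j <;> simp [Matrix.mul_apply, Fin.sum_univ_two]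

lemma lower_nsmul (n : ℕ) (x : R) : lower (n • x) = lower x ^ n := by
  induction n with
  | zero => simp
  | succ n ih => rw [succ_nsmul, lower_add, ih, pow_succ]

theorem upper_mul_mem {m : ℕ} [NeZero m] {H : Subgroup SL(2, ZMod m)} {y : ZMod m}
    (h : upper y ∈ H) (r : ZMod m) : upper (y * r) ∈ H := by
  rw [← ZMod.natCast_zmod_val r, mul_comm, ← nsmul_eq_mul, upper_nsmul]
  exact pow_mem h _

theorem lower_mul_mem {m : ℕ} [NeZero m] {H : Subgroup SL(2, ZMod m)} {y : ZMod m}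
    (h : lower y ∈ H) (r : ZMod m) : lower (y * r) ∈ H := by
  rw [← ZMod.natCast_zmod_val r, mul_comm, ← nsmul_eq_mul, lower_nsmul]
  exact pow_mem h _

lemma diagUnit_eq_upper_mul_lower_mul_upper_mul_lower (s t : R) (u : Rˣ)
    (hu : (u : R) = 1 + s * t) :
    diagUnit u = upper s * lower t * upper (-(s * ↑u⁻¹)) * lower (-(t * u)) := by
  have hinv : (u : R) * ↑u⁻¹ = 1 := u.mul_inv
  ext i j; fin_cases i <;> fin_cases j <;> simp [Matrix.mul_apply, Fin.sum_univ_two]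
  · linear_combination (1 + s * ↑u⁻¹ * t * u) * hu - s * t * u * hinv
  · linear_combination s * hinv - s * ↑u⁻¹ * hu
  · linear_combination t * hu - s * t ^ 2 * hinv
  · linear_combination hinv - ↑u⁻¹ * hu

lemma eq_lower_mul_diagUnit_mul_upper (M : SL(2, R)) (u : Rˣ) (hu : (u : R) = M 0 0) :
    M = lower (M 1 0 * ↑u⁻¹) * diagUnit u * upper (M 0 1 * ↑u⁻¹) := by
  have hinv : (u : R) * ↑u⁻¹ = 1 := u.mul_inv
  have hdet : M 0 0 * M 1 1 - M 0 1 * M 1 0 = 1 := by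
    rw [← Matrix.det_fin_two]; exact M.det_coe
  ext i j; fin_cases i <;> fin_cases j <;> simp [Matrix.mul_apply, Fin.sum_univ_two]
  · linear_combination -hu
  · linear_combination -(M 0 1) * hinv
  · linear_combination -(M 1 1) * hinv + M 1 1 * ↑u⁻¹ * hu + ↑u⁻¹ * hdet

variable {H : Subgroup SL(2, R)} {d e : R}

theorem mem_of_isUnit (hT : ∀ r, upper (d * r) ∈ H) (hL : ∀ r, lower (e * r) ∈ H)
    {M : SL(2, R)} (hunit : IsUnit (M 0 0)) (h00 : d * e ∣ M 0 0 - 1) (h01 : d ∣ M 0 1)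
    (h10 : e ∣ M 1 0) : M ∈ H := by
  obtain ⟨u, hu⟩ := hunit
  obtain ⟨α, hα⟩ := h00
  obtain ⟨β, hβ⟩ := h01
  obtain ⟨γ, hγ⟩ := h10
  rw [eq_lower_mul_diagUnit_mul_upper M u hu,
    diagUnit_eq_upper_mul_lower_mul_upper_mul_lower d (e * α) u (by linear_combination hu + hα),
    hβ, hγ, mul_assoc d, mul_assoc e, ← mul_neg, ← mul_neg, mul_assoc e]
  have hd : upper d ∈ H := by simpa using hT 1
  exact mul_mem (mul_mem (hL _) (mul_mem (mul_mem (mul_mem hd (hL α)) (hT _)) (hL _))) (hT _)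

theorem mem_of_isUnit_add_mul (hT : ∀ r, upper (d * r) ∈ H) (hL : ∀ r, lower (e * r) ∈ H)
    {M : SL(2, R)} (h00 : d * e ∣ M 0 0 - 1) (h01 : d ∣ M 0 1) (h10 : e ∣ M 1 0) (x : R)
    (hx : IsUnit (M 0 0 + d * x * M 1 0)) : M ∈ H := by
  have hxM : upper (d * x) * M ∈ H := by
    apply mem_of_isUnit hT hL <;>
      simp only [Matrix.SpecialLinearGroup.coe_mul, coe_upper, Matrix.mul_apply, Fin.sum_univ_two,
        Matrix.of_apply, Matrix.cons_val_zero, Matrix.cons_val_one, Matrix.cons_val_fin_one,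
        one_mul, zero_mul, zero_add]
    · exact hx
    · rw [add_sub_right_comm]
      exact dvd_add h00 (mul_dvd_mul (dvd_mul_right d x) h10)
    · exact dvd_add h01 (dvd_mul_of_dvd_left (dvd_mul_right d x) _)
    · exact h10
  exact (H.mul_mem_cancel_left (hT x)).mp hxM

end SL2

theorem Int.exists_isCoprime_add_mul {a b n : ℤ} (hn : n ≠ 0)
    (h : ∀ p : ℤ, Prime p → p ∣ n → p ∣ a → ¬ p ∣ b) : ∃ x, IsCoprime (a + b * x) n := by
  classical
  -- `x` is the product of the primes dividing `n` but not `a`.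
  let S : Finset ℕ := n.natAbs.primeFactors.filter fun p => ¬ (p : ℤ) ∣ a
  refine ⟨∏ p ∈ S, (p : ℤ), isCoprime_of_prime_dvd (fun h0 => hn h0.2) fun q hq hqab hqn => ?_⟩
  have hp : q.natAbs.Prime := Int.prime_iff_natAbs_prime.mp hq
  rw [← Int.natAbs_dvd] at hqab hqn
  set p := q.natAbs
  have hpZ : Prime (p : ℤ) := Nat.prime_iff_prime_int.mp hp
  by_cases hpa : (p : ℤ) ∣ a
  · have hpS : ¬ (p : ℤ) ∣ ∏ r ∈ S, (r : ℤ) := by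
      rw [Prime.dvd_finsetProd_iff hpZ]
      rintro ⟨r, hr, hpr⟩
      rw [Finset.mem_filter, Nat.mem_primeFactors] at hr
      rw [Int.natCast_dvd_natCast, Nat.prime_dvd_prime_iff_eq hp hr.1.1] at hpr
      exact hr.2 (hpr ▸ hpa)
    exact (hpZ.dvd_or_dvd ((dvd_add_right hpa).mp hqab)).elim (h _ hpZ hqn hpa) hpS
  · have hpS : (p : ℤ) ∣ ∏ r ∈ S, (r : ℤ) :=
      Finset.dvd_prod_of_mem _ <| Finset.mem_filter.mpr
        ⟨Nat.mem_primeFactors.mpr ⟨hp, Int.natCast_dvd.mp hqn, by simpa using hn⟩, hpa⟩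
    exact hpa (by simpa using dvd_sub hqab (hpS.mul_left b))

theorem ZMod.natCast_dvd_natCast_gcd (m n : ℕ) : (n : ZMod m) ∣ (m.gcd n : ZMod m) := by
  refine ⟨m.gcdB n, ?_⟩
  have := congrArg (Int.cast : ℤ → ZMod m) (Nat.gcd_eq_gcd_ab m n)
  push_cast [ZMod.natCast_self] at this
  simpa using this

open CongruenceSubgroup

theorem natCast_dvd_of_mem_Gamma_gcd {m n : ℕ} {γ : SL2Z} (hγ : γ ∈ Gamma (m.gcd n)) :
    (n : ZMod m) ∣ (γ 0 0 : ZMod m) - 1 ∧ (n : ZMod m) ∣ (γ 0 1 : ZMod m) ∧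
      (n : ZMod m) ∣ (γ 1 0 : ZMod m) := by
  have hdvd : ∀ z : ℤ, (z : ZMod (m.gcd n)) = 0 → (n : ZMod m) ∣ (z : ZMod m) := fun z hz => by
    obtain ⟨k, rfl⟩ := (ZMod.intCast_zmod_eq_zero_iff_dvd _ _).mp hz
    push_cast
    exact (ZMod.natCast_dvd_natCast_gcd m n).mul_right _
  obtain ⟨h00, h01, h10, -⟩ := Gamma_mem.mp hγ
  exact ⟨by simpa using hdvd (γ 0 0 - 1) (by simp [h00]), hdvd _ h01, hdvd _ h10⟩

theorem exists_isUnit_add_mul_of_mem_Gamma_gcd {m n d : ℕ} (hm : m ≠ 0) (hd : d ∣ n)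
    {γ : SL2Z} (hγ : γ ∈ Gamma (m.gcd n)) :
    ∃ x : ZMod m, IsUnit ((γ 0 0 : ZMod m) + d * x * (γ 1 0 : ZMod m)) := by
  have hdet : γ 0 0 * γ 1 1 - γ 0 1 * γ 1 0 = 1 := by rw [← Matrix.det_fin_two]; exact γ.det_coe
  have hprime : ∀ p : ℤ, Prime p → p ∣ m → p ∣ γ 0 0 → ¬ p ∣ d * γ 1 0 := by
    intro p hp hpm hpa hpb
    apply hp.not_dvd_one
    rcases hp.dvd_or_dvd hpb with hpd | hpc
    · have hpg : p ∣ (m.gcd n : ℤ) := by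
        rw [← Int.gcd_natCast_natCast]
        exact Int.dvd_coe_gcd hpm (hpd.trans (Int.natCast_dvd_natCast.mpr hd))
      have hg : (m.gcd n : ℤ) ∣ γ 0 0 - 1 :=
        (ZMod.intCast_zmod_eq_zero_iff_dvd _ _).mp (by simp [(Gamma_mem.mp hγ).1])
      simpa using dvd_sub hpa (hpg.trans hg)
    · rw [← hdet]
      exact dvd_sub (hpa.mul_right _) (hpc.mul_left _)
  obtain ⟨X, hX⟩ := Int.exists_isCoprime_add_mul (by exact_mod_cast hm) hprime
  refine ⟨X, ?_⟩
  have := (ZMod.coe_int_isUnit_iff_isCoprime _ m).mpr hX.symm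
  push_cast at this
  rwa [mul_right_comm] at this

theorem map_matT_pow {R : Type*} [CommRing R] (f : ℤ →+* R) (n : ℕ) :
    Matrix.SpecialLinearGroup.map f (matT ^ n) = SL2.upper (n : R) := by
  have : Matrix.SpecialLinearGroup.map f matT = SL2.upper 1 := by
    ext i j
    rw [Matrix.SpecialLinearGroup.map_apply_coe]
    fin_cases i <;> fin_cases j <;> simp [matT]
  rw [map_pow, this, ← SL2.upper_nsmul, nsmul_one]

theorem map_matL_pow {R : Type*} [CommRing R] (f : ℤ →+* R) (n : ℕ) :
    Matrix.SpecialLinearGroup.map f (matL ^ n) = SL2.lower (n : R) := by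
  have : Matrix.SpecialLinearGroup.map f matL = SL2.lower 1 := by
    ext i j
    rw [Matrix.SpecialLinearGroup.map_apply_coe]
    fin_cases i <;> fin_cases j <;> simp [matL]
  rw [map_pow, this, ← SL2.lower_nsmul, nsmul_one]

theorem Gamma_gcd_le {Γ : Subgroup SL2Z} {m d e : ℕ} (hm : m ≠ 0) (hΓ : Gamma m ≤ Γ)
    (hT : matT ^ d ∈ Γ) (hL : matL ^ e ∈ Γ) : Gamma (m.gcd (d * e)) ≤ Γ := by
  have : NeZero m := ⟨hm⟩
  let φ : SL2Z →* SL(2, ZMod m) := Matrix.SpecialLinearGroup.map (Int.castRingHom (ZMod m))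
  intro γ hγ
  rw [← Subgroup.comap_map_eq_self (f := φ) hΓ]
  have hT' := SL2.upper_mul_mem (H := Γ.map φ) ⟨_, hT, map_matT_pow _ d⟩
  have hL' := SL2.lower_mul_mem (H := Γ.map φ) ⟨_, hL, map_matL_pow _ e⟩
  obtain ⟨h00, h01, h10⟩ := natCast_dvd_of_mem_Gamma_gcd hγ
  obtain ⟨x, hx⟩ := exists_isUnit_add_mul_of_mem_Gamma_gcd hm (dvd_mul_right d e) hγ
  push_cast at h00 h01 h10
  exact SL2.mem_of_isUnit_add_mul hT' hL' h00 (dvd_of_mul_right_dvd h01)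
    (dvd_of_mul_left_dvd h10) x hx

theorem larcher_infty_zero_general (Γ : Subgroup PSL2Z) (m d e : ℕ)
    (hm : IsLeast {N : ℕ | 0 < N ∧ GammaBar N ≤ Γ} m)
    (hd : IsLeast {k : ℕ | 0 < k ∧ projSL matT ^ k ∈ Γ} d)
    (he : IsLeast {k : ℕ | 0 < k ∧ projSL matL ^ k ∈ Γ} e) :
    m ∣ d * e := by
  obtain ⟨⟨hm0, hmΓ⟩, hmin⟩ := hm
  have hT : matT ^ d ∈ Γ.comap projSL := by simpa using hd.1.2
  have hL : matL ^ e ∈ Γ.comap projSL := by simpa using he.1.2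
  have hgcd : GammaBar (m.gcd (d * e)) ≤ Γ := Subgroup.map_le_iff_le_comap.mpr <|
    Gamma_gcd_le hm0.ne' (Subgroup.map_le_iff_le_comap.mp hmΓ) hT hL
  have hle : m ≤ m.gcd (d * e) := hmin ⟨Nat.gcd_pos_of_pos_left _ hm0, hgcd⟩
  exact Nat.gcd_eq_left_iff_dvd.mp (le_antisymm (Nat.gcd_le_left _ hm0) hle)

/-- Larcher's theorem: if `Γ` is a finite-index congruence subgroup of `PSL₂(ℤ)` of level `m`,
`d` is the width of the cusp `∞` and `e` is the width of the cusp `0`, then `m ∣ d·e`. -/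
theorem larcher_infty_zero (Γ : Subgroup PSL2Z) (hfin : Γ.index ≠ 0) (m d e : ℕ)
    (hm : IsLeast {N : ℕ | 0 < N ∧ GammaBar N ≤ Γ} m)
    (hd : IsLeast {k : ℕ | 0 < k ∧ projSL matT ^ k ∈ Γ} d)
    (he : IsLeast {k : ℕ | 0 < k ∧ projSL matL ^ k ∈ Γ} e) :
    m ∣ d * e :=
  larcher_infty_zero_general Γ m d e hm hd he
end

section
/- Let Γ be a finite-index subgroup of Γ̄(2) in PSL₂(ℤ) which is congruence of level 2n, i.e., 2n is the smallest positive integer N with Γ̄(N) ≤ Γ. Let d be the least positive integer with Ā^d ∈ Γ and e the least positive integer with B̄^e ∈ Γ. Then n divides 2·d·e. -/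
/-!
Pull `Γ` back to `H ≤ SL(2, ℤ)`. Since `A = T²` and `B = L²`, the group `H` contains `Γ(2n)`,
`T^(2d)` and `L^(2e)`; we show that it contains `Γ(g)` for `g = gcd(2n, 4de)`, so minimality of
the level forces `2n ∣ 4de`.

We descend from `Γ(2n)` one prime at a time: for `g ∣ m` and `mp ∣ 2n`, every `γ ∈ Γ(m)` agrees
modulo `mp` with an element of `⟨T^(2d), L^(2e)⟩`. If `p ∤ m`, the powers `T^m`, `L^m` generate
`SL(2, ℤ)` modulo `p`, and the Chinese remainder theorem glues this with `γ ≡ 1 (mod m)`. If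
`p ∣ m`, products of multiples of `m` vanish modulo `mp`: the off-diagonal entries of `γ` come from
`T^m` and `L^m`, and the diagonal entries `1 ± t` from the commutator of `T^(2d)` and `L^(2ek)`,
whose diagonal is `1 ± 4dek` up to such products. Since `g ∣ t`, Bézout for `gcd(2n, 4de)`
provides `k` with `4dek ≡ t (mod 2n)`.
-/

open CongruenceSubgroup ModularGroup

lemma unipotent_word_eq {R : Type*} [CommRing R] {a y t u v : R} (hay : a * y = t)
    (htt : t * t = 0) (htu : t * u = 0) (htv : t * v = 0) (huv : u * v = 0) :
    !![1, a; 0, 1] * !![1, 0; y, 1] * !![1, -a; 0, 1] * !![1, 0; -y, 1] *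
        !![1, u + a * t; 0, 1] * !![1, 0; v - y * t, 1] = !![1 + t, u; v, 1 - t] := by
  subst hay
  set t := a * y
  simp only [Matrix.mul_fin_two]
  congrm !![?_, ?_; ?_, ?_]
  · linear_combination (1 - a * (1 + t) * t * y) * htt + ((1 + t) * v - y - (1 + t) * y * t) * htu
      + a * (1 + t) * t * htv + huv
  · linear_combination (1 + t) * htu + a * (1 + t) * htt
  · linear_combination -htv + (y + t * v - t * t * y) * htt + (y * v - y * y * t) * htu
  · linear_combination y * htu + t * htt

lemma intCast_mul_intCast_eq_zero {m N : ℕ} (hN : N ∣ m) {x y : ℤ} (hx : (m : ℤ) ∣ x)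
    (hy : (m : ℤ) ∣ y) : (x : ZMod (m * N)) * y = 0 := by
  rw [← Int.cast_mul, ZMod.intCast_zmod_eq_zero_iff_dvd, Nat.cast_mul]
  exact (mul_dvd_mul_left _ (Int.natCast_dvd_natCast.2 hN)).trans (mul_dvd_mul hx hy)

lemma exists_intCast_mul_eq {M c : ℕ} {x : ℤ} (hx : (M.gcd c : ℤ) ∣ x) :
    ∃ k : ℤ, (c : ZMod M) * k = x := by
  obtain ⟨s, rfl⟩ := hx
  refine ⟨Nat.gcdB M c * s, ?_⟩
  rw [Nat.gcd_eq_gcd_ab]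
  push_cast
  rw [ZMod.natCast_self]
  ring

lemma dvd_of_isLeast_pow_mem {G : Type*} [Group G] {H : Subgroup G} {g : G} {d k : ℕ}
    (hd : IsLeast {k | 0 < k ∧ g ^ k ∈ H} d) (hk : g ^ k ∈ H) : d ∣ k := by
  have hmod : g ^ (k % d) ∈ H := by
    have hsplit : g ^ k = (g ^ d) ^ (k / d) * g ^ (k % d) := by
      rw [← pow_mul, ← pow_add, Nat.div_add_mod]
    have h := H.mul_mem (H.inv_mem (H.pow_mem hd.1.2 (k / d))) hk
    rwa [hsplit, inv_mul_cancel_left] at h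
  by_contra hdk
  have hpos : 0 < k % d := Nat.pos_of_ne_zero (mt Nat.dvd_of_mod_eq_zero hdk)
  exact (Nat.mod_lt k hd.1.1).not_ge (hd.2 ⟨hpos, hmod⟩)

lemma coe_matL_zpow (n : ℤ) :
    ((matL ^ n : SL2Z) : Matrix (Fin 2) (Fin 2) ℤ) = !![1, 0; n, 1] := by
  have hL : ((matL : SL2Z) : Matrix (Fin 2) (Fin 2) ℤ) = !![1, 0; 1, 1] := rfl
  induction n with
  | zero => rw [zpow_zero, Matrix.SpecialLinearGroup.coe_one, Matrix.one_fin_two]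
  | succ n h =>
    rw [zpow_add_one, Matrix.SpecialLinearGroup.coe_mul, h, hL]
    simp
  | pred n h =>
    rw [zpow_sub_one, Matrix.SpecialLinearGroup.coe_mul, h, Matrix.SpecialLinearGroup.coe_inv,
      hL]
    simp [Matrix.adjugate_fin_two]
    ring

lemma matA_eq : matA = T ^ (2 : ℤ) := Subtype.ext (coe_T_zpow 2).symm

lemma matB_eq : matB = matL ^ (2 : ℤ) := Subtype.ext (coe_matL_zpow 2).symm

lemma S_eq_T_inv_mul_matL_mul_T_inv : S = T⁻¹ * matL * T⁻¹ := by decide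

lemma coe_map_T_zpow {R : Type*} [CommRing R] (x : ℤ) :
    (Matrix.SpecialLinearGroup.map (Int.castRingHom R) (T ^ x) : Matrix (Fin 2) (Fin 2) R) =
      !![1, (x : R); 0, 1] := by
  rw [Matrix.SpecialLinearGroup.map_apply_coe, coe_T_zpow]
  ext i j
  fin_cases i <;> fin_cases j <;> simp

lemma coe_map_matL_zpow {R : Type*} [CommRing R] (x : ℤ) :
    (Matrix.SpecialLinearGroup.map (Int.castRingHom R) (matL ^ x) : Matrix (Fin 2) (Fin 2) R) =
      !![1, 0; (x : R), 1] := by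
  rw [Matrix.SpecialLinearGroup.map_apply_coe, coe_matL_zpow]
  ext i j
  fin_cases i <;> fin_cases j <;> simp

lemma mem_Gamma_iff_dvd {N : ℕ} {γ : SL2Z} :
    γ ∈ Gamma N ↔ ∀ i j, (N : ℤ) ∣ γ i j - (1 : Matrix (Fin 2) (Fin 2) ℤ) i j := by
  rw [Gamma_mem', Matrix.SpecialLinearGroup.ext_iff]
  refine forall₂_congr fun i j => ?_
  rw [← ZMod.intCast_eq_intCast_iff_dvd_sub, eq_comm]
  simp [Matrix.one_apply, apply_ite]

lemma dvd_entries_of_mem_Gamma {m : ℕ} {γ : SL2Z} (hγ : γ ∈ Gamma m) :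
    (m : ℤ) ∣ γ 0 0 - 1 ∧ (m : ℤ) ∣ γ 0 1 ∧ (m : ℤ) ∣ γ 1 0 ∧ (m : ℤ) ∣ γ 1 1 - 1 := by
  have h := mem_Gamma_iff_dvd.1 hγ
  exact ⟨by simpa using h 0 0, by simpa using h 0 1, by simpa using h 1 0, by simpa using h 1 1⟩

lemma mul_inv_mem_Gamma_iff {N : ℕ} {γ w : SL2Z} :
    γ * w⁻¹ ∈ Gamma N ↔ Matrix.SpecialLinearGroup.map (Int.castRingHom (ZMod N)) γ =
      Matrix.SpecialLinearGroup.map (Int.castRingHom (ZMod N)) w := by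
  rw [Gamma_mem', map_mul, map_inv, mul_inv_eq_one]

lemma mem_Gamma_mul_of_coprime {m N : ℕ} (h : m.Coprime N) {γ : SL2Z} (hm : γ ∈ Gamma m)
    (hN : γ ∈ Gamma N) : γ ∈ Gamma (m * N) := by
  rw [mem_Gamma_iff_dvd] at *
  intro i j
  exact_mod_cast h.isCoprime.mul_dvd (hm i j) (hN i j)

lemma T_zpow_mem_Gamma {N : ℕ} {x : ℤ} (hx : (N : ℤ) ∣ x) : T ^ x ∈ Gamma N := by
  rw [mem_Gamma_iff_dvd, coe_T_zpow]
  intro i j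
  fin_cases i <;> fin_cases j <;> simp [hx]

lemma matL_zpow_mem_Gamma {N : ℕ} {x : ℤ} (hx : (N : ℤ) ∣ x) : matL ^ x ∈ Gamma N := by
  rw [mem_Gamma_iff_dvd, coe_matL_zpow]
  intro i j
  fin_cases i <;> fin_cases j <;> simp [hx]

lemma T_zpow_mem_closure {a b : ℕ} {x : ℤ} (hx : (a : ℤ) ∣ x) :
    T ^ x ∈ Subgroup.closure {T ^ (a : ℤ), matL ^ (b : ℤ)} := by
  obtain ⟨c, rfl⟩ := hx
  rw [zpow_mul]
  exact zpow_mem (Subgroup.subset_closure (by simp)) c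

lemma matL_zpow_mem_closure {a b : ℕ} {x : ℤ} (hx : (b : ℤ) ∣ x) :
    matL ^ x ∈ Subgroup.closure {T ^ (a : ℤ), matL ^ (b : ℤ)} := by
  obtain ⟨c, rfl⟩ := hx
  rw [zpow_mul]
  exact zpow_mem (Subgroup.subset_closure (by simp)) c

lemma closure_le_closure_of_dvd {a b m : ℕ} (ha : a ∣ m) (hb : b ∣ m) :
    Subgroup.closure {T ^ (m : ℤ), matL ^ (m : ℤ)} ≤
      Subgroup.closure {T ^ (a : ℤ), matL ^ (b : ℤ)} := by
  rw [Subgroup.closure_le, Set.insert_subset_iff, Set.singleton_subset_iff]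
  exact ⟨T_zpow_mem_closure (Int.natCast_dvd_natCast.2 ha),
    matL_zpow_mem_closure (Int.natCast_dvd_natCast.2 hb)⟩

lemma closure_le_Gamma (m : ℕ) : Subgroup.closure {T ^ (m : ℤ), matL ^ (m : ℤ)} ≤ Gamma m := by
  rw [Subgroup.closure_le, Set.insert_subset_iff, Set.singleton_subset_iff]
  exact ⟨T_zpow_mem_Gamma dvd_rfl, matL_zpow_mem_Gamma dvd_rfl⟩

lemma Gamma_sup_closure_eq_top {m N : ℕ} (h : m.Coprime N) :
    Gamma N ⊔ Subgroup.closure {T ^ (m : ℤ), matL ^ (m : ℤ)} = ⊤ := by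
  obtain ⟨u, v, huv⟩ := h.isCoprime
  set K := Gamma N ⊔ Subgroup.closure {T ^ (m : ℤ), matL ^ (m : ℤ)}
  have hT : T ^ (u * m + v * N) ∈ K := by
    rw [zpow_add]
    exact mul_mem (Subgroup.mem_sup_right (T_zpow_mem_closure (dvd_mul_left _ _)))
      (Subgroup.mem_sup_left (T_zpow_mem_Gamma (dvd_mul_left _ _)))
  have hL : matL ^ (u * m + v * N) ∈ K := by
    rw [zpow_add]
    exact mul_mem (Subgroup.mem_sup_right (matL_zpow_mem_closure (dvd_mul_left _ _)))
      (Subgroup.mem_sup_left (matL_zpow_mem_Gamma (dvd_mul_left _ _)))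
  rw [huv, zpow_one] at hT hL
  rw [eq_top_iff, ← SpecialLinearGroup.SL2Z_generators, Subgroup.closure_le,
    Set.insert_subset_iff, Set.singleton_subset_iff, S_eq_T_inv_mul_matL_mul_T_inv]
  exact ⟨mul_mem (mul_mem (inv_mem hT) hL) (inv_mem hT), hT⟩

lemma exists_mul_inv_mem_Gamma_of_coprime {m N : ℕ} (h : m.Coprime N) {γ : SL2Z}
    (hγ : γ ∈ Gamma m) :
    ∃ w ∈ Subgroup.closure {T ^ (m : ℤ), matL ^ (m : ℤ)}, γ * w⁻¹ ∈ Gamma (m * N) := by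
  have := Gamma_normal N
  have hγ' : γ ∈ ((Gamma N ⊔ Subgroup.closure {T ^ (m : ℤ), matL ^ (m : ℤ)} :
      Subgroup SL2Z) : Set SL2Z) := by
    rw [Gamma_sup_closure_eq_top h]
    exact Set.mem_univ γ
  rw [Subgroup.normal_mul] at hγ'
  obtain ⟨g, hg, w, hw, rfl : g * w = γ⟩ := hγ'
  refine ⟨w, hw, ?_⟩
  rw [mul_inv_cancel_right]
  refine mem_Gamma_mul_of_coprime h ?_ hg
  simpa using mul_mem hγ (inv_mem (closure_le_Gamma m hw))

lemma map_eq_map_unipotent_word {m N : ℕ} (hN : N ∣ m) {γ : SL2Z} (hγ : γ ∈ Gamma m)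
    {a y : ℤ} (hay : (a * y : ZMod (m * N)) = γ 0 0 - 1) :
    Matrix.SpecialLinearGroup.map (Int.castRingHom (ZMod (m * N))) γ =
      Matrix.SpecialLinearGroup.map (Int.castRingHom (ZMod (m * N)))
        (T ^ a * matL ^ y * T ^ (-a) * matL ^ (-y) * T ^ (γ 0 1 + a * (γ 0 0 - 1)) *
          matL ^ (γ 1 0 - y * (γ 0 0 - 1))) := by
  obtain ⟨ht, hu, hv, ht'⟩ := dvd_entries_of_mem_Gamma hγ
  set t := γ 0 0 - 1
  have htt : (t : ZMod (m * N)) * t = 0 := intCast_mul_intCast_eq_zero hN ht ht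
  have htu : (t : ZMod (m * N)) * γ 0 1 = 0 := intCast_mul_intCast_eq_zero hN ht hu
  have htv : (t : ZMod (m * N)) * γ 1 0 = 0 := intCast_mul_intCast_eq_zero hN ht hv
  have huv : (γ 0 1 : ZMod (m * N)) * γ 1 0 = 0 := intCast_mul_intCast_eq_zero hN hu hv
  have htt' : (t : ZMod (m * N)) * (γ 1 1 - 1 : ℤ) = 0 := intCast_mul_intCast_eq_zero hN ht ht'
  have hdet : (γ 0 0 * γ 1 1 - γ 0 1 * γ 1 0 : ZMod (m * N)) = 1 := by
    have h := γ.det_coe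
    rw [Matrix.det_fin_two] at h
    exact_mod_cast congrArg (Int.cast : ℤ → ZMod (m * N)) h
  have h00 : (γ 0 0 : ZMod (m * N)) = 1 + t := by push_cast [t]; ring
  have h11 : (γ 1 1 : ZMod (m * N)) = 1 - t := by
    push_cast [t] at htt' ⊢
    linear_combination hdet + huv - htt'
  apply Subtype.ext
  simp only [map_mul, Matrix.SpecialLinearGroup.coe_mul, coe_map_T_zpow, coe_map_matL_zpow]
  rw [Matrix.SpecialLinearGroup.map_apply_coe, Matrix.eta_fin_two (RingHom.mapMatrix _ _)]
  push_cast
  rw [unipotent_word_eq (by push_cast [t]; exact hay) htt htu htv huv]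
  simp [h00, h11]

lemma exists_mul_inv_mem_Gamma_of_dvd {a b m N : ℕ} (ha : a ∣ m) (hb : b ∣ m) (hN : N ∣ m)
    (hg : (m * N).gcd (a * b) ∣ m) {γ : SL2Z} (hγ : γ ∈ Gamma m) :
    ∃ w ∈ Subgroup.closure {T ^ (a : ℤ), matL ^ (b : ℤ)}, γ * w⁻¹ ∈ Gamma (m * N) := by
  obtain ⟨ht, hu, hv, -⟩ := dvd_entries_of_mem_Gamma hγ
  obtain ⟨k, hk⟩ := exists_intCast_mul_eq (Int.natCast_dvd_natCast.2 hg |>.trans ht)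
  have ha' : (a : ℤ) ∣ m := Int.natCast_dvd_natCast.2 ha
  have hb' : (b : ℤ) ∣ m := Int.natCast_dvd_natCast.2 hb
  refine ⟨_, ?_, mul_inv_mem_Gamma_iff.2 (map_eq_map_unipotent_word hN hγ (a := a) (y := b * k)
    (by push_cast at hk ⊢; rw [← hk]; ring))⟩
  refine mul_mem (mul_mem (mul_mem (mul_mem (mul_mem ?_ ?_) ?_) ?_) ?_) ?_
  · exact T_zpow_mem_closure dvd_rfl
  · exact matL_zpow_mem_closure (dvd_mul_right _ _)
  · exact T_zpow_mem_closure (dvd_neg.2 dvd_rfl)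
  · exact matL_zpow_mem_closure (dvd_neg.2 (dvd_mul_right _ _))
  · exact T_zpow_mem_closure (dvd_add (ha'.trans hu) (dvd_mul_right _ _))
  · exact matL_zpow_mem_closure
      (dvd_sub (hb'.trans hv) (dvd_mul_of_dvd_left (dvd_mul_right _ _) _))

theorem Gamma_gcd_le_s3 {H : Subgroup SL2Z} {M a b : ℕ} (hM : M ≠ 0) (ha : a ∣ M) (hb : b ∣ M)
    (hT : T ^ (a : ℤ) ∈ H) (hL : matL ^ (b : ℤ) ∈ H) (hH : Gamma M ≤ H) :
    Gamma (M.gcd (a * b)) ≤ H := by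
  have hU : Subgroup.closure {T ^ (a : ℤ), matL ^ (b : ℤ)} ≤ H := by
    rw [Subgroup.closure_le, Set.insert_subset_iff, Set.singleton_subset_iff]
    exact ⟨hT, hL⟩
  suffices ∀ c m, M = m * c → M.gcd (a * b) ∣ m → Gamma m ≤ H from
    this _ _ (Nat.mul_div_cancel' (Nat.gcd_dvd_left M (a * b))).symm dvd_rfl
  intro c
  induction c using Nat.strong_induction_on with
  | _ c ih =>
    intro m hMc hgm
    rcases eq_or_ne c 1 with rfl | hc
    · rw [mul_one] at hMc
      exact hMc ▸ hH
    obtain ⟨p, hp, c', rfl⟩ := Nat.exists_prime_and_dvd hc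
    have hc' : c' < p * c' := by
      have : c' ≠ 0 := by rintro rfl; exact hM (by simpa using hMc)
      exact lt_mul_left (Nat.pos_of_ne_zero this) hp.one_lt
    have hmp : m * p ∣ M := ⟨c', by rw [hMc]; ring⟩
    have hIH : Gamma (m * p) ≤ H :=
      ih c' hc' (m * p) (by rw [hMc]; ring) (hgm.trans (dvd_mul_right _ _))
    have ham : a ∣ m := (Nat.dvd_gcd ha (dvd_mul_right a b)).trans hgm
    have hbm : b ∣ m := (Nat.dvd_gcd hb (dvd_mul_left b a)).trans hgm
    intro γ hγ
    obtain ⟨w, hw, hγw⟩ : ∃ w ∈ Subgroup.closure {T ^ (a : ℤ), matL ^ (b : ℤ)},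
        γ * w⁻¹ ∈ Gamma (m * p) := by
      by_cases hpm : p ∣ m
      · exact exists_mul_inv_mem_Gamma_of_dvd ham hbm hpm
          ((Nat.gcd_dvd_gcd_of_dvd_left _ hmp).trans hgm) hγ
      · obtain ⟨w, hw, hγw⟩ :=
          exists_mul_inv_mem_Gamma_of_coprime ((hp.coprime_iff_not_dvd.2 hpm).symm) hγ
        exact ⟨w, closure_le_closure_of_dvd ham hbm hw, hγw⟩
    simpa using H.mul_mem (hIH hγw) (hU hw)

theorem larcher_restated_general (Γ : Subgroup PSL2Z) (n d e : ℕ)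
    (hlevel : IsLeast {N : ℕ | 0 < N ∧ GammaBar N ≤ Γ} (2 * n))
    (hd : IsLeast {k : ℕ | 0 < k ∧ Abar ^ k ∈ Γ} d)
    (he : IsLeast {k : ℕ | 0 < k ∧ Bbar ^ k ∈ Γ} e) :
    n ∣ 2 * d * e := by
  obtain ⟨⟨hn, hΓ⟩, hmin⟩ := hlevel
  have hH : Gamma (2 * n) ≤ Γ.comap projSL := Subgroup.map_le_iff_le_comap.1 hΓ
  have hA (k : ℕ) : T ^ ((2 * k : ℕ) : ℤ) ∈ Γ.comap projSL ↔ Abar ^ k ∈ Γ := by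
    rw [Subgroup.mem_comap, Nat.cast_mul, Nat.cast_ofNat, zpow_mul, ← matA_eq, zpow_natCast,
      map_pow]
    rfl
  have hB (k : ℕ) : matL ^ ((2 * k : ℕ) : ℤ) ∈ Γ.comap projSL ↔ Bbar ^ k ∈ Γ := by
    rw [Subgroup.mem_comap, Nat.cast_mul, Nat.cast_ofNat, zpow_mul, ← matB_eq, zpow_natCast,
      map_pow]
    rfl
  have hdn : d ∣ n := dvd_of_isLeast_pow_mem hd ((hA n).1 (hH (T_zpow_mem_Gamma dvd_rfl)))
  have hen : e ∣ n := dvd_of_isLeast_pow_mem he ((hB n).1 (hH (matL_zpow_mem_Gamma dvd_rfl)))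
  have hgcd := Gamma_gcd_le_s3 hn.ne' (mul_dvd_mul_left 2 hdn) (mul_dvd_mul_left 2 hen)
    ((hA d).2 hd.1.2) ((hB e).2 he.1.2) hH
  have hle := hmin ⟨Nat.gcd_pos_of_pos_left _ hn, Subgroup.map_le_iff_le_comap.2 hgcd⟩
  have hdvd : 2 * n ∣ 2 * (2 * d * e) := by
    rw [show 2 * (2 * d * e) = 2 * d * (2 * e) by ring, ← Nat.gcd_eq_left_iff_dvd]
    exact le_antisymm (Nat.le_of_dvd hn (Nat.gcd_dvd_left _ _)) hle
  exact Nat.dvd_of_mul_dvd_mul_left two_pos hdvd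

/-- Larcher's theorem restated for subgroups of `Γ̄(2)`: if `Γ ≤ Γ̄(2)` is a finite-index
congruence subgroup of level `2n`, `d` is the degree of the face at `∞` (least `d > 0` with
`Ā^d ∈ Γ`) and `e` is the degree of the black vertex at `0` (least `e > 0` with `B̄^e ∈ Γ`),
then `n ∣ 2·d·e`. -/
theorem larcher_restated (Γ : Subgroup PSL2Z) (hsub : Γ ≤ GammaBar 2)
    (hfin : Γ.relIndex (GammaBar 2) ≠ 0) (n d e : ℕ)
    (hlevel : IsLeast {N : ℕ | 0 < N ∧ GammaBar N ≤ Γ} (2 * n))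
    (hd : IsLeast {k : ℕ | 0 < k ∧ Abar ^ k ∈ Γ} d)
    (he : IsLeast {k : ℕ | 0 < k ∧ Bbar ^ k ∈ Γ} e) :
    n ∣ 2 * d * e :=
  larcher_restated_general Γ n d e hlevel hd he
end

section
/- Let Γ be a finite-index congruence subgroup of PSL₂(ℤ) of level m, i.e., m is the smallest positive integer with Γ̄(m) ≤ Γ. Then Γ has a cusp of width m: there exists g ∈ PSL₂(ℤ) such that the least positive integer k with g·T^k·g⁻¹ ∈ Γ is equal to m, where T is the image of [[1,1],[0,1]]. -/
/-!
Let `p` be a prime dividing the level `m` and put `n = m / p`. Modulo `Γ(m)`, the group `Γ(n)` is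
generated by the conjugates of `T^n`: for `p ∤ n` because `SL₂(𝔽_p)` is generated by unipotent
matrices, for `p ∣ n` because `Γ(n)/Γ(m)` is the additive group of trace-zero matrices mod `p`.
As `Γ(n) ⊄ Γ`, some conjugate `g_p T^n g_p⁻¹` lies outside `Γ`. Modulo `m` this conjugate only
depends on `g_p` modulo `p`, and by the Chinese remainder theorem one `g ∈ SL₂(ℤ)` is congruent to
every `g_p` modulo `p`. The exponents `k` with `g T^k g⁻¹ ∈ Γ` are then the multiples of a divisor
of `m` dividing none of the `m / p`, that is, of `m` itself.
-/

open Matrix Matrix.SpecialLinearGroup CongruenceSubgroup ModularGroup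
open scoped MatrixGroups

local notation "SLMOD(" N ")" => Matrix.SpecialLinearGroup.map (Int.castRingHom (ZMod N))

section PowMem

variable {G : Type*} [Group G] {H : Subgroup G} {x : G}

lemma pow_gcd_mem {k m : ℕ} (hk : x ^ k ∈ H) (hm : x ^ m ∈ H) : x ^ k.gcd m ∈ H := by
  rw [← zpow_natCast, Nat.gcd_eq_gcd_ab, _root_.zpow_add, _root_.zpow_mul, _root_.zpow_mul,
    zpow_natCast, zpow_natCast]
  exact mul_mem (zpow_mem hk _) (zpow_mem hm _)

lemma isLeast_pow_mem_of_forall_pow_div_notMem {m : ℕ} (hm0 : 0 < m) (hm : x ^ m ∈ H)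
    (hp : ∀ p ∈ m.primeFactors, x ^ (m / p) ∉ H) :
    IsLeast {k | 0 < k ∧ x ^ k ∈ H} m := by
  refine ⟨⟨hm0, hm⟩, fun k ⟨hk0, hk⟩ ↦ Nat.le_of_dvd hk0 ?_⟩
  by_contra hmk
  set e := k.gcd m
  have hem : e ∣ m := Nat.gcd_dvd_right k m
  have hne : m / e ≠ 1 := fun h ↦ hmk <| by
    rw [← Nat.div_mul_cancel hem, h, one_mul]; exact Nat.gcd_dvd_left k m
  obtain ⟨p, hp', hpe⟩ := Nat.exists_prime_and_dvd hne
  have hpm : p ∈ m.primeFactors :=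
    Nat.mem_primeFactors.2 ⟨hp', hpe.trans (Nat.div_dvd_of_dvd hem), hm0.ne'⟩
  have hep : e ∣ m / p :=
    Nat.dvd_div_of_mul_dvd (by rw [mul_comm]; exact Nat.mul_dvd_of_dvd_div hem hpe)
  apply hp p hpm
  rw [← Nat.mul_div_cancel' hep, pow_mul]
  exact pow_mem (pow_gcd_mem hk hm) _

end PowMem

lemma exists_intCast_eq_forall_mem {s : Finset ℕ} (hs : ∀ p ∈ s, p.Prime)
    (r : ∀ p : ℕ, ZMod p) : ∃ x : ℤ, ∀ p ∈ s, (x : ZMod p) = r p := by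
  have hI : Pairwise (Function.onFun IsCoprime fun p : s ↦ Ideal.span {((p : ℕ) : ℤ)}) := by
    intro p q hpq
    rw [Function.onFun, Ideal.isCoprime_span_singleton_iff, Nat.isCoprime_iff_coprime]
    exact (Nat.coprime_primes (hs p p.2) (hs q q.2)).2 (Subtype.coe_injective.ne hpq)
  obtain ⟨x, hx⟩ := Ideal.exists_forall_sub_mem_ideal hI fun p ↦ ((r p).cast : ℤ)
  refine ⟨x, fun p hp ↦ ?_⟩
  have : NeZero p := ⟨(hs p hp).ne_zero⟩
  have := hx ⟨p, hp⟩
  rw [Ideal.mem_span_singleton, ← ZMod.intCast_eq_intCast_iff_dvd_sub] at this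
  rw [← this, ZMod.intCast_zmod_cast]

namespace Matrix.SpecialLinearGroup

section Elementary

variable {R : Type*} [CommRing R]

def upper (r : R) : SL(2, R) := ⟨!![1, r; 0, 1], by simp [det_fin_two_of]⟩

def lower (r : R) : SL(2, R) := ⟨!![1, 0; r, 1], by simp [det_fin_two_of]⟩

@[simp] lemma coe_upper (r : R) : (upper r : Matrix (Fin 2) (Fin 2) R) = !![1, r; 0, 1] := rfl

@[simp] lemma coe_lower (r : R) : (lower r : Matrix (Fin 2) (Fin 2) R) = !![1, 0; r, 1] := rfl

lemma SL2_det_expl (A : SL(2, R)) : A 0 0 * A 1 1 - A 0 1 * A 1 0 = 1 := by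
  rw [← det_fin_two]; exact A.2

@[simp] lemma lower_zero : lower (0 : R) = 1 := by
  ext i j; fin_cases i <;> fin_cases j <;> simp

lemma lower_mul_lower (r s : R) : lower r * lower s = lower (r + s) := by
  ext i j; fin_cases i <;> fin_cases j <;> simp [mul_apply, Fin.sum_univ_two]

lemma map_upper {R' : Type*} [CommRing R'] (f : R →+* R') (r : R) :
    map f (upper r) = upper (f r) := by
  ext i j; fin_cases i <;> fin_cases j <;> simp

lemma map_lower {R' : Type*} [CommRing R'] (f : R →+* R') (r : R) :
    map f (lower r) = lower (f r) := by
  ext i j; fin_cases i <;> fin_cases j <;> simp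

lemma exists_eq_upper_mul_lower_mul_upper {F : Type*} [Field F] {M : SL(2, F)} (hc : M 1 0 ≠ 0) :
    ∃ x y z : F, M = upper x * lower y * upper z := by
  have hdet := SL2_det_expl M
  refine ⟨(M 0 0 - 1) / M 1 0, M 1 0, (M 1 1 - 1) / M 1 0, ?_⟩
  ext i j
  fin_cases i <;> fin_cases j <;> simp [mul_apply, Fin.sum_univ_two] <;> field_simp <;> grind

lemma exists_eq_upper_mul_lower_mul_upper_mul_lower {F : Type*} [Field F] (M : SL(2, F)) :
    ∃ x y z w : F, M = upper x * lower y * upper z * lower w := by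
  by_cases hc : M 1 0 = 0
  · have hd : (M * lower 1 : SL(2, F)) 1 0 ≠ 0 := by
      have hdet := SL2_det_expl M
      rw [hc, mul_zero, sub_zero] at hdet
      simpa [mul_apply, Fin.sum_univ_two, hc] using right_ne_zero_of_mul_eq_one hdet
    obtain ⟨x, y, z, h⟩ := exists_eq_upper_mul_lower_mul_upper hd
    refine ⟨x, y, z, -1, ?_⟩
    rw [← h, mul_assoc, lower_mul_lower, add_neg_cancel, lower_zero, mul_one]
  · obtain ⟨x, y, z, h⟩ := exists_eq_upper_mul_lower_mul_upper hc
    exact ⟨x, y, z, 0, by rw [lower_zero, mul_one, h]⟩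

end Elementary

end Matrix.SpecialLinearGroup

lemma T_zpow_eq_upper (k : ℤ) : T ^ k = upper k := Subtype.ext (coe_T_zpow k)

lemma coe_conj_T_zpow (g : SL(2, ℤ)) (k : ℤ) :
    ((g * T ^ k * g⁻¹ : SL(2, ℤ)) : Matrix (Fin 2) (Fin 2) ℤ) =
      !![1 - k * g 0 0 * g 1 0, k * g 0 0 ^ 2; -k * g 1 0 ^ 2, 1 + k * g 0 0 * g 1 0] := by
  have hdet := SL2_det_expl g
  rw [coe_mul, coe_mul, coe_T_zpow, coe_inv, adjugate_fin_two]
  ext i j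
  fin_cases i <;> fin_cases j <;> simp [mul_apply, Fin.sum_univ_two] <;> grind

lemma S_mul_T_zpow_mul_S_inv (k : ℤ) : S * T ^ k * S⁻¹ = lower (-k) := by
  ext i j
  rw [coe_conj_T_zpow]
  fin_cases i <;> fin_cases j <;> simp [S]

lemma map_conj_T_pow_eq_of_map_eq {p : ℕ} {g h : SL(2, ℤ)} (hgh : SLMOD(p) g = SLMOD(p) h)
    (k : ℕ) : SLMOD(k * p) (g * T ^ k * g⁻¹) = SLMOD(k * p) (h * T ^ k * h⁻¹) := by
  have ha : g 0 0 ≡ h 0 0 [ZMOD p] := (ZMod.intCast_eq_intCast_iff _ _ _).1 congr($hgh 0 0)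
  have hc : g 1 0 ≡ h 1 0 [ZMOD p] := (ZMod.intCast_eq_intCast_iff _ _ _).1 congr($hgh 1 0)
  have hmul {x y : ℤ} (hxy : x ≡ y [ZMOD p]) : (k * x : ZMod (k * p)) = k * y := by
    exact_mod_cast (ZMod.intCast_eq_intCast_iff _ _ _).2 (by exact_mod_cast hxy.mul_left' (c := k))
  have hac := hmul (ha.mul hc)
  have ha2 := hmul (ha.pow 2)
  have hc2 := hmul (hc.pow 2)
  push_cast at hac ha2 hc2
  ext i j
  rw [← zpow_natCast, SL_reduction_mod_hom_val, SL_reduction_mod_hom_val, coe_conj_T_zpow,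
    coe_conj_T_zpow]
  fin_cases i <;> fin_cases j <;> simp [mul_assoc, hac, ha2, hc2]

lemma mul_inv_mem_Gamma_iff_s5 {N : ℕ} {x y : SL(2, ℤ)} :
    x * y⁻¹ ∈ Γ(N) ↔ SLMOD(N) x = SLMOD(N) y := by
  rw [Gamma_mem', map_mul, map_inv, mul_inv_eq_one]

lemma Gamma_inf_le_Gamma_mul {n p : ℕ} (h : n.Coprime p) : Γ(n) ⊓ Γ(p) ≤ Γ(n * p) := by
  have key {a b : ℤ} (hn : (a : ZMod n) = b) (hp : (a : ZMod p) = b) : (a : ZMod (n * p)) = b := by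
    rw [ZMod.intCast_eq_intCast_iff] at *
    exact_mod_cast (Int.modEq_and_modEq_iff_modEq_mul (by simpa using h)).1 ⟨hn, hp⟩
  intro γ hγ
  obtain ⟨hn, hp⟩ := Subgroup.mem_inf.1 hγ
  rw [Gamma_mem] at hn hp ⊢
  refine ⟨?_, ?_, ?_, ?_⟩
  · exact_mod_cast key (b := 1) (by exact_mod_cast hn.1) (by exact_mod_cast hp.1)
  · exact_mod_cast key (b := 0) (by exact_mod_cast hn.2.1) (by exact_mod_cast hp.2.1)
  · exact_mod_cast key (b := 0) (by exact_mod_cast hn.2.2.1) (by exact_mod_cast hp.2.2.1)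
  · exact_mod_cast key (b := 1) (by exact_mod_cast hn.2.2.2) (by exact_mod_cast hp.2.2.2)

lemma T_pow_mem_Gamma (n : ℕ) : T ^ n ∈ Γ(n) := by
  simpa using ModularGroup_T_pow_mem_Gamma n n dvd_rfl

lemma conj_T_zpow_mul_mem_normalClosure (n : ℕ) (g : SL(2, ℤ)) (k : ℤ) :
    g * T ^ (n * k) * g⁻¹ ∈ Subgroup.normalClosure {T ^ n} := by
  rw [_root_.zpow_mul, zpow_natCast, ← conj_zpow]
  refine zpow_mem (Subgroup.normalClosure_normal.conj_mem _ ?_ g) k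
  exact Subgroup.subset_normalClosure (Set.mem_singleton _)

lemma upper_mul_mem_normalClosure (n : ℕ) (k : ℤ) :
    upper (n * k) ∈ Subgroup.normalClosure {T ^ n} := by
  simpa [T_zpow_eq_upper] using conj_T_zpow_mul_mem_normalClosure n 1 k

lemma lower_mul_mem_normalClosure (n : ℕ) (k : ℤ) :
    lower (n * k) ∈ Subgroup.normalClosure {T ^ n} := by
  have := conj_T_zpow_mul_mem_normalClosure n S (-k)
  rwa [S_mul_T_zpow_mul_S_inv, mul_neg, neg_neg] at this

lemma normalClosure_T_pow_le_Gamma (n : ℕ) : Subgroup.normalClosure {T ^ n} ≤ Γ(n) :=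
  have := Gamma_normal n
  Subgroup.normalClosure_le_normal <| Set.singleton_subset_iff.2 (T_pow_mem_Gamma n)

lemma exists_mem_normalClosure_T_pow_map_eq {n p : ℕ} (hp : p.Prime) (hpn : ¬ p ∣ n)
    (M : SL(2, ZMod p)) : ∃ w ∈ Subgroup.normalClosure {T ^ n}, SLMOD(p) w = M := by
  have := Fact.mk hp
  have hn : (n : ZMod p) ≠ 0 := by rwa [Ne, ZMod.natCast_eq_zero_iff]
  have hmul (r : ZMod p) : ∃ k : ℤ, ((n * k : ℤ) : ZMod p) = r :=
    ⟨((n : ZMod p)⁻¹ * r).cast, by push_cast; exact mul_inv_cancel_left₀ hn r⟩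
  have hU (r : ZMod p) : ∃ u ∈ Subgroup.normalClosure {T ^ n}, SLMOD(p) u = upper r := by
    obtain ⟨k, hk⟩ := hmul r
    exact ⟨_, upper_mul_mem_normalClosure n k, by rw [map_upper]; exact congrArg upper hk⟩
  have hL (r : ZMod p) : ∃ u ∈ Subgroup.normalClosure {T ^ n}, SLMOD(p) u = lower r := by
    obtain ⟨k, hk⟩ := hmul r
    exact ⟨_, lower_mul_mem_normalClosure n k, by rw [map_lower]; exact congrArg lower hk⟩
  obtain ⟨x, y, z, w, rfl⟩ := exists_eq_upper_mul_lower_mul_upper_mul_lower M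
  obtain ⟨u₁, hu₁, h₁⟩ := hU x
  obtain ⟨u₂, hu₂, h₂⟩ := hL y
  obtain ⟨u₃, hu₃, h₃⟩ := hU z
  obtain ⟨u₄, hu₄, h₄⟩ := hL w
  exact ⟨u₁ * u₂ * u₃ * u₄, mul_mem (mul_mem (mul_mem hu₁ hu₂) hu₃) hu₄,
    by simp only [map_mul, h₁, h₂, h₃, h₄]⟩

lemma exists_mem_normalClosure_T_pow_map_eq_of_dvd {n p : ℕ} (hpn : p ∣ n) {γ : SL(2, ℤ)}
    (hγ : γ ∈ Γ(n)) : ∃ w ∈ Subgroup.normalClosure {T ^ n}, SLMOD(n * p) w = SLMOD(n * p) γ := by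
  obtain ⟨h00, h01, h10, h11⟩ := Gamma_mem.1 hγ
  obtain ⟨x, hx⟩ : (n : ℤ) ∣ γ 0 0 - 1 :=
    (ZMod.intCast_eq_intCast_iff_dvd_sub _ _ _).1 (by simpa using h00.symm)
  obtain ⟨y, hy⟩ : (n : ℤ) ∣ γ 0 1 := (ZMod.intCast_zmod_eq_zero_iff_dvd _ _).1 h01
  obtain ⟨z, hz⟩ : (n : ℤ) ∣ γ 1 0 := (ZMod.intCast_zmod_eq_zero_iff_dvd _ _).1 h10
  obtain ⟨t, ht⟩ : (n : ℤ) ∣ γ 1 1 - 1 :=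
    (ZMod.intCast_eq_intCast_iff_dvd_sub _ _ _).1 (by simpa using h11.symm)
  have hdet := SL2_det_expl γ
  rw [sub_eq_iff_eq_add'] at hx ht
  have hε : (n : ZMod (n * p)) * n = 0 := by
    exact_mod_cast (ZMod.natCast_eq_zero_iff _ _).2 (Nat.mul_dvd_mul_left n hpn)
  have htr : (n : ZMod (n * p)) * (x + t) = 0 := by
    have h : (n : ℤ) * (x + t) = -(n * n) * (x * t - y * z) := by
      rw [hx, ht, hy, hz] at hdet; linear_combination hdet
    have := congrArg (Int.cast : ℤ → ZMod (n * p)) h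
    push_cast at this
    rw [this, hε, neg_zero, zero_mul]
  -- Modulo `n * p`, where `n ^ 2 = 0`, the three factors are `1 + n • [[x, -x], [x, -x]]`,
  -- `1 + n • [[0, y + x], [0, 0]]` and `1 + n • [[0, 0], [z - x, 0]]`, so their product is
  -- `1 + n • [[x, y], [z, -x]]`, and `n * (x + t) = 0` by the determinant.
  refine ⟨lower 1 * T ^ (n * -x) * (lower 1)⁻¹ * upper (n * (y + x)) * lower (n * (z - x)),
    mul_mem (mul_mem ?_ (upper_mul_mem_normalClosure n _)) (lower_mul_mem_normalClosure n _), ?_⟩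
  · exact conj_T_zpow_mul_mem_normalClosure n _ _
  ext i j
  rw [SL_reduction_mod_hom_val, SL_reduction_mod_hom_val, coe_mul, coe_mul, coe_conj_T_zpow]
  fin_cases i <;> fin_cases j <;> simp [mul_apply, Fin.sum_univ_two, hx, hy, hz, ht] <;> grind

theorem Gamma_le_Gamma_mul_sup_normalClosure {n p : ℕ} (hp : p.Prime) :
    Γ(n) ≤ Γ(n * p) ⊔ Subgroup.normalClosure {T ^ n} := by
  intro γ hγ
  obtain ⟨w, hw, hγw⟩ : ∃ w ∈ Subgroup.normalClosure {T ^ n}, γ * w⁻¹ ∈ Γ(n * p) := by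
    by_cases hpn : p ∣ n
    · obtain ⟨w, hw, hwγ⟩ := exists_mem_normalClosure_T_pow_map_eq_of_dvd hpn hγ
      exact ⟨w, hw, mul_inv_mem_Gamma_iff_s5.2 hwγ.symm⟩
    · obtain ⟨w, hw, hwγ⟩ := exists_mem_normalClosure_T_pow_map_eq hp hpn (SLMOD(p) γ)
      have hcop : n.Coprime p := ((Nat.Prime.coprime_iff_not_dvd hp).2 hpn).symm
      refine ⟨w, hw, Gamma_inf_le_Gamma_mul hcop <| Subgroup.mem_inf.2 ⟨?_, ?_⟩⟩
      · exact mul_mem hγ (inv_mem (normalClosure_T_pow_le_Gamma n hw))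
      · exact mul_inv_mem_Gamma_iff_s5.2 hwγ.symm
  simpa using Subgroup.mul_mem_sup hγw hw

lemma exists_forall_map_eq {s : Finset ℕ} (hs : ∀ p ∈ s, p.Prime)
    (g : ∀ p ∈ s, SL(2, ℤ)) : ∃ h : SL(2, ℤ), ∀ p (hp : p ∈ s), SLMOD(p) h = SLMOD(p) (g p hp) := by
  have hdec (p : ℕ) : ∃ x y z w : ZMod p, ∀ hp : p ∈ s,
      SLMOD(p) (g p hp) = upper x * lower y * upper z * lower w := by
    by_cases hp : p ∈ s
    · have := Fact.mk (hs p hp)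
      obtain ⟨x, y, z, w, h⟩ :=
        exists_eq_upper_mul_lower_mul_upper_mul_lower (SLMOD(p) (g p hp))
      exact ⟨x, y, z, w, fun _ ↦ h⟩
    · exact ⟨0, 0, 0, 0, fun h ↦ absurd h hp⟩
  choose x y z w hxyzw using hdec
  obtain ⟨X, hX⟩ := exists_intCast_eq_forall_mem hs x
  obtain ⟨Y, hY⟩ := exists_intCast_eq_forall_mem hs y
  obtain ⟨Z, hZ⟩ := exists_intCast_eq_forall_mem hs z
  obtain ⟨W, hW⟩ := exists_intCast_eq_forall_mem hs w
  refine ⟨upper X * lower Y * upper Z * lower W, fun p hp ↦ ?_⟩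
  simp only [map_mul, map_upper, map_lower, eq_intCast, hX p hp, hY p hp, hZ p hp, hW p hp,
    hxyzw p hp]

lemma projSL_mem_iff_of_map_eq {Γ : Subgroup PSL2Z} {N : ℕ} (hΓ : GammaBar N ≤ Γ)
    {x y : SL(2, ℤ)} (hxy : SLMOD(N) x = SLMOD(N) y) : projSL x ∈ Γ ↔ projSL y ∈ Γ := by
  have hmem : projSL (x * y⁻¹) ∈ Γ := hΓ ⟨_, mul_inv_mem_Gamma_iff_s5.2 hxy, rfl⟩
  rw [← Subgroup.mul_mem_cancel_left Γ (inv_mem hmem), ← map_inv, ← map_mul]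
  group

lemma exists_conj_T_pow_notMem {Γ : Subgroup PSL2Z} {n p : ℕ} (hp : p.Prime)
    (hΓ : GammaBar (n * p) ≤ Γ) (hn : ¬ GammaBar n ≤ Γ) :
    ∃ g : SL(2, ℤ), projSL (g * T ^ n * g⁻¹) ∉ Γ := by
  by_contra! h
  refine hn (Subgroup.map_le_iff_le_comap.2 <| (Gamma_le_Gamma_mul_sup_normalClosure hp).trans <|
    sup_le (Subgroup.map_le_iff_le_comap.1 hΓ) ?_)
  rw [Subgroup.normalClosure, Subgroup.closure_le]
  intro x hx
  obtain ⟨a, ha, hax⟩ := Group.mem_conjugatesOfSet_iff.1 hx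
  obtain ⟨c, rfl⟩ := isConj_iff.1 hax
  exact (Set.mem_singleton_iff.1 ha) ▸ h c

lemma exists_conj_T_pow_div_notMem {Γ : Subgroup PSL2Z} {m p : ℕ}
    (hm : IsLeast {N : ℕ | 0 < N ∧ GammaBar N ≤ Γ} m) (hp : p ∈ m.primeFactors) :
    ∃ g : SL(2, ℤ), projSL (g * T ^ (m / p) * g⁻¹) ∉ Γ := by
  obtain ⟨hp', hpm, -⟩ := Nat.mem_primeFactors.1 hp
  refine exists_conj_T_pow_notMem hp' (by rw [Nat.div_mul_cancel hpm]; exact hm.1.2) fun h ↦ ?_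
  have hle := hm.2 ⟨Nat.div_pos (Nat.le_of_dvd hm.1.1 hpm) hp'.pos, h⟩
  exact (Nat.div_lt_self hm.1.1 hp'.one_lt).not_ge hle

theorem larcher_cusp_of_width_level_general (Γ : Subgroup PSL2Z) (m : ℕ)
    (hm : IsLeast {N : ℕ | 0 < N ∧ GammaBar N ≤ Γ} m) :
    ∃ g : PSL2Z, IsLeast {k : ℕ | 0 < k ∧ g * projSL matT ^ k * g⁻¹ ∈ Γ} m := by
  obtain ⟨hm0, hΓm⟩ := hm.1
  choose g hg using fun p (hp : p ∈ m.primeFactors) ↦ exists_conj_T_pow_div_notMem hm hp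
  obtain ⟨h, hh⟩ := exists_forall_map_eq (fun p hp ↦ Nat.prime_of_mem_primeFactors hp) g
  have hpow (k : ℕ) : projSL (h * T * h⁻¹) ^ k = projSL (h * T ^ k * h⁻¹) := by
    rw [← map_pow, conj_pow]
  refine ⟨projSL h, ?_⟩
  simp_rw [← map_inv, ← map_pow, ← map_mul, show matT = T from rfl, ← hpow]
  refine isLeast_pow_mem_of_forall_pow_div_notMem hm0 ?_ fun p hp hmem ↦ hg p hp ?_
  · rw [hpow]
    exact hΓm ⟨_, (Gamma_normal m).conj_mem _ (T_pow_mem_Gamma m) h, rfl⟩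
  · have hΓ : GammaBar (m / p * p) ≤ Γ := by
      rwa [Nat.div_mul_cancel (Nat.dvd_of_mem_primeFactors hp)]
    rwa [projSL_mem_iff_of_map_eq hΓ (map_conj_T_pow_eq_of_map_eq (hh p hp) _).symm, ← hpow]

/-- Larcher's theorem: a finite-index congruence subgroup of `PSL₂(ℤ)` of level `m` has a
cusp of width `m`: there is `g ∈ PSL₂(ℤ)` such that the least `k > 0` with
`g·T^k·g⁻¹ ∈ Γ` equals `m`. -/
theorem larcher_cusp_of_width_level (Γ : Subgroup PSL2Z) (hfin : Γ.index ≠ 0) (m : ℕ)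
    (hm : IsLeast {N : ℕ | 0 < N ∧ GammaBar N ≤ Γ} m) :
    ∃ g : PSL2Z, IsLeast {k : ℕ | 0 < k ∧ g * projSL matT ^ k * g⁻¹ ∈ Γ} m :=
  larcher_cusp_of_width_level_general Γ m hm
end

section
/- Let Γ be a finite-index subgroup of PSL₂(ℤ), and let m be the least common multiple of the cusp widths of Γ, i.e., the least common multiple over all g ∈ PSL₂(ℤ) of the least positive integer k with g·T^k·g⁻¹ ∈ Γ, where T is the image of [[1,1],[0,1]]. Then Γ is a congruence subgroup (i.e., Γ̄(N) ≤ Γ for some positive integer N) if and only if Γ̄(m) ≤ Γ. -/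
/-!
If `Γ̄(N) ≤ Γ`, every conjugate of `T ^ m` lies in `Γ` because every cusp width divides `m`, so
it is enough to show `Γ(m) ≤ E(m) ⊔ Γ(N)`, where `E(m)` is the normal closure of `T ^ m` in
`SL(2, ℤ)`. Split `N = n₁ n₂` with `n₁` dividing a power of `m` and `n₂` prime to `m`.
Since `(1 + nX)(1 + nY) ≡ 1 + n(X + Y) mod n²` and the trace of `X` vanishes mod `n`, three
conjugates of powers of `T ^ n` give `Γ(n) ≤ E(n) ⊔ Γ(n²)`; iterating, `Γ(m) ≤ E(m) ⊔ Γ(n₁)`.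
As `m n₁` is a unit mod `n₂`, `T ≡ T ^ (m n₁ u) mod n₂` with `T ^ (m n₁ u) ∈ E(m) ⊓ Γ(n₁)`, and
`T` normally generates `SL(2, ℤ)`; the Chinese remainder theorem glues the two congruences.
Conversely, finite index makes all widths divide the index of the normal core, so `m ≠ 0`.
-/

open Matrix.SpecialLinearGroup CongruenceSubgroup ModularGroup

namespace Wohlfahrt

lemma dvd_of_isLeast_pow_mem {G : Type*} [Group G] {H : Subgroup G} {x : G} {w k : ℕ}
    (hw : IsLeast {k | 0 < k ∧ x ^ k ∈ H} w) (hk : x ^ k ∈ H) : w ∣ k := by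
  have hmod : x ^ (k % w) ∈ H := by
    have : x ^ (k % w) = ((x ^ w) ^ (k / w))⁻¹ * x ^ k := by
      rw [← pow_mul, eq_inv_mul_iff_mul_eq, ← pow_add, Nat.div_add_mod]
    exact this ▸ mul_mem (inv_mem (pow_mem hw.1.2 _)) hk
  refine Nat.dvd_of_mod_eq_zero (by_contra fun hne => ?_)
  exact (Nat.mod_lt k hw.1.1).not_ge (hw.2 ⟨Nat.pos_of_ne_zero hne, hmod⟩)

lemma normalClosure_singleton_le {G : Type*} [Group G] {x : G} {H : Subgroup G}
    (h : ∀ g, g * x * g⁻¹ ∈ H) : Subgroup.normalClosure {x} ≤ H := by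
  refine Subgroup.closure_le _ |>.mpr fun y hy => ?_
  obtain ⟨_, rfl, hc⟩ := Group.mem_conjugatesOfSet_iff.mp hy
  obtain ⟨c, rfl⟩ := isConj_iff.mp hc
  exact h c

lemma exists_mul_eq_dvd_pow_coprime (m : ℕ) {N : ℕ} (hN : N ≠ 0) :
    ∃ n₁ n₂ k : ℕ, n₁ * n₂ = N ∧ n₁ ∣ m ^ k ∧ m.Coprime n₂ := by
  induction N using Nat.strong_induction_on with
  | _ N ih =>
  by_cases hg : m.gcd N = 1
  · exact ⟨1, N, 0, one_mul N, one_dvd _, hg⟩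
  have hgN : m.gcd N ∣ N := Nat.gcd_dvd_right m N
  have hg1 : 1 < m.gcd N := by
    have := Nat.gcd_pos_of_pos_right m (Nat.pos_of_ne_zero hN)
    omega
  obtain ⟨n₁, n₂, k, h, hdvd, hcop⟩ := ih (N / m.gcd N) (Nat.div_lt_self (by omega) hg1)
    (Nat.div_ne_zero_iff_of_dvd hgN |>.mpr ⟨hN, by omega⟩)
  refine ⟨m.gcd N * n₁, n₂, k + 1, by rw [mul_assoc, h, Nat.mul_div_cancel' hgN], ?_, hcop⟩
  rw [pow_succ']
  exact mul_dvd_mul (Nat.gcd_dvd_left m N) hdvd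

instance instNormalGamma (N : ℕ) : (Gamma N).Normal := Gamma_normal N

lemma inv_mul_mem_Gamma_iff {N : ℕ} {A B : SL2Z} :
    A⁻¹ * B ∈ Gamma N ↔ ∀ i j, (N : ℤ) ∣ B i j - A i j := by
  rw [Gamma_mem', map_mul, map_inv, inv_mul_eq_one, Matrix.SpecialLinearGroup.ext_iff]
  simp [ZMod.intCast_eq_intCast_iff_dvd_sub]

lemma mem_Gamma_iff_dvd {N : ℕ} {A : SL2Z} :
    A ∈ Gamma N ↔ ∀ i j, (N : ℤ) ∣ A i j - (1 : SL2Z) i j := by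
  simpa using inv_mul_mem_Gamma_iff (A := 1) (B := A) (N := N)

lemma Gamma_le_Gamma_of_dvd {M N : ℕ} (h : M ∣ N) : Gamma N ≤ Gamma M := fun _ hA =>
  mem_Gamma_iff_dvd.mpr fun i j =>
    (Int.natCast_dvd_natCast.mpr h).trans (mem_Gamma_iff_dvd.mp hA i j)

lemma Gamma_inf_Gamma_le {a b : ℕ} (h : a.Coprime b) : Gamma a ⊓ Gamma b ≤ Gamma (a * b) :=
  fun _ ⟨ha, hb⟩ => mem_Gamma_iff_dvd.mpr fun i j => by
    push_cast
    exact (Nat.isCoprime_iff_coprime.mpr h).mul_dvd (mem_Gamma_iff_dvd.mp ha i j)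
      (mem_Gamma_iff_dvd.mp hb i j)

lemma coe_matL : (matL : Matrix (Fin 2) (Fin 2) ℤ) = !![1, 0; 1, 1] := rfl

lemma coe_matL_mul_T_zpow_mul_matL_inv (k : ℤ) :
    ((matL * T ^ k * matL⁻¹ : SL2Z) : Matrix (Fin 2) (Fin 2) ℤ) = !![1 - k, k; -k, 1 + k] := by
  simp [coe_T_zpow, coe_matL, Matrix.adjugate_fin_two, sub_eq_add_neg, add_comm]

lemma coe_S_mul_T_zpow_mul_S_inv (k : ℤ) :
    ((S * T ^ k * S⁻¹ : SL2Z) : Matrix (Fin 2) (Fin 2) ℤ) = !![1, 0; -k, 1] := by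
  simp [coe_T_zpow, coe_S, Matrix.adjugate_fin_two]

lemma S_mul_T_mul_S_inv : S * T * S⁻¹ = matL⁻¹ := by
  ext : 1
  simp [coe_S, coe_T, coe_matL, Matrix.adjugate_fin_two]

lemma S_eq_T_inv_mul_matL_mul_T_inv : S = T⁻¹ * matL * T⁻¹ := by
  ext : 1
  simp [coe_S, coe_matL]

lemma eq_top_of_T_mem {H : Subgroup SL2Z} [H.Normal] (hT : T ∈ H) : H = ⊤ := by
  have hL : matL ∈ H := by
    simpa [S_mul_T_mul_S_inv] using ‹H.Normal›.conj_mem T hT S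
  rw [eq_top_iff, ← SpecialLinearGroup.SL2Z_generators, Subgroup.closure_le]
  rintro _ (rfl | rfl)
  · rw [S_eq_T_inv_mul_matL_mul_T_inv]
    exact mul_mem (mul_mem (inv_mem hT) hL) (inv_mem hT)
  · exact hT

def normalClosureTPow (n : ℕ) : Subgroup SL2Z := Subgroup.normalClosure {T ^ n}

instance instNormalNormalClosureTPow (n : ℕ) : (normalClosureTPow n).Normal :=
  Subgroup.normalClosure_normal

lemma T_pow_mem_normalClosureTPow (n : ℕ) : T ^ n ∈ normalClosureTPow n :=
  Subgroup.subset_normalClosure (Set.mem_singleton _)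

lemma conj_T_zpow_mem_normalClosureTPow (n : ℕ) (g : SL2Z) (k : ℤ) :
    g * T ^ ((n : ℤ) * k) * g⁻¹ ∈ normalClosureTPow n := by
  rw [zpow_mul, zpow_natCast, ← conj_zpow]
  exact zpow_mem (Subgroup.Normal.conj_mem inferInstance _ (T_pow_mem_normalClosureTPow n) g) k

lemma normalClosureTPow_le_of_dvd {m n : ℕ} (h : m ∣ n) :
    normalClosureTPow n ≤ normalClosureTPow m := by
  obtain ⟨c, rfl⟩ := h
  refine Subgroup.normalClosure_le_normal ?_
  rintro _ rfl
  rw [pow_mul]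
  exact pow_mem (T_pow_mem_normalClosureTPow m) c

lemma Gamma_le_normalClosureTPow_sup_Gamma_sq (n : ℕ) :
    Gamma n ≤ normalClosureTPow n ⊔ Gamma (n ^ 2) := by
  intro A hA
  have h := mem_Gamma_iff_dvd.mp hA
  obtain ⟨α, hα⟩ : (n : ℤ) ∣ A 0 0 - 1 := by simpa using h 0 0
  obtain ⟨β, hβ⟩ : (n : ℤ) ∣ A 0 1 := by simpa using h 0 1
  obtain ⟨γ, hγ⟩ : (n : ℤ) ∣ A 1 0 := by simpa using h 1 0
  obtain ⟨δ, hδ⟩ : (n : ℤ) ∣ A 1 1 - 1 := by simpa using h 1 1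
  have hdet : A 0 0 * A 1 1 - A 0 1 * A 1 0 = 1 := by
    rw [← Matrix.det_fin_two]; exact A.2
  have htr : (n : ℤ) * (α + δ) = n ^ 2 * (β * γ - α * δ) := by
    linear_combination hdet - A 1 1 * hα - (1 + n * α) * hδ + n * γ * hβ + A 0 1 * hγ
  -- Modulo `n²` the three factors add up to `1 + n * !![-δ, β; γ, δ]`, and `-δ ≡ α` by `htr`.
  set E := T ^ ((n : ℤ) * (β - δ)) * (matL * T ^ ((n : ℤ) * δ) * matL⁻¹) *
    (S * T ^ ((n : ℤ) * -(γ + δ)) * S⁻¹)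
  have hE : E ∈ normalClosureTPow n := by
    refine mul_mem (mul_mem ?_ (conj_T_zpow_mem_normalClosureTPow n matL δ))
      (conj_T_zpow_mem_normalClosureTPow n S _)
    simpa using conj_T_zpow_mem_normalClosureTPow n 1 (β - δ)
  have hEA : E⁻¹ * A ∈ Gamma (n ^ 2) := by
    refine inv_mul_mem_Gamma_iff.mpr fun i j => ?_
    rw [coe_mul, coe_mul, coe_T_zpow, coe_matL_mul_T_zpow_mul_matL_inv,
      coe_S_mul_T_zpow_mul_S_inv]
    simp only [Matrix.mul_fin_two]
    fin_cases i <;> fin_cases j <;>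
      simp only [Nat.cast_pow, Fin.zero_eta, Fin.mk_one, Matrix.of_apply, Matrix.cons_val',
        Matrix.cons_val_zero, Matrix.cons_val_one, Matrix.cons_val_fin_one]
    · exact ⟨β * γ - α * δ + (β - δ) * δ - (γ + δ) * (δ + (β - δ) + n * (β - δ) * δ),
        by linear_combination hα + htr⟩
    · exact ⟨-((β - δ) * δ), by linear_combination hβ⟩
    · exact ⟨-((γ + δ) * δ), by linear_combination hγ⟩
    · exact ⟨0, by linear_combination hδ⟩
  simpa using Subgroup.mul_mem_sup hE hEA

lemma Gamma_le_normalClosureTPow_sup_Gamma_pow (m k : ℕ) :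
    Gamma m ≤ normalClosureTPow m ⊔ Gamma (m ^ (k + 1)) := by
  induction k with
  | zero => simp
  | succ k ih =>
    have hstep : Gamma (m ^ (k + 1)) ≤ normalClosureTPow m ⊔ Gamma (m ^ (k + 2)) :=
      (Gamma_le_normalClosureTPow_sup_Gamma_sq _).trans <| sup_le_sup
        (normalClosureTPow_le_of_dvd (dvd_pow_self m k.succ_ne_zero))
        (Gamma_le_Gamma_of_dvd (by rw [← pow_mul]; exact pow_dvd_pow m (by omega)))
    exact ih.trans (sup_le le_sup_left hstep)

lemma normalClosureTPow_inf_Gamma_sup_Gamma_eq_top {m n₁ n₂ : ℕ} (h : (m * n₁).Coprime n₂) :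
    normalClosureTPow m ⊓ Gamma n₁ ⊔ Gamma n₂ = ⊤ := by
  obtain ⟨u, v, huv⟩ := Nat.isCoprime_iff_coprime.mpr h
  push_cast at huv
  refine eq_top_of_T_mem ?_
  have hT : T = T ^ ((m : ℤ) * (n₁ * u)) * T ^ ((n₂ : ℤ) * v) := by
    rw [← zpow_add, show (m : ℤ) * (n₁ * u) + n₂ * v = 1 by linear_combination huv, zpow_one]
  rw [hT]
  refine Subgroup.mul_mem_sup ⟨by simpa using conj_T_zpow_mem_normalClosureTPow m 1 _, ?_⟩ ?_
  · simpa using ModularGroup_T_pow_mem_Gamma n₁ _ ⟨m * u, by ring⟩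
  · simpa using ModularGroup_T_pow_mem_Gamma n₂ _ ⟨v, rfl⟩

theorem Gamma_le_normalClosureTPow_sup_Gamma (m : ℕ) {N : ℕ} (hN : N ≠ 0) :
    Gamma m ≤ normalClosureTPow m ⊔ Gamma N := by
  obtain ⟨n₁, n₂, k, rfl, hdvd, hcop⟩ := exists_mul_eq_dvd_pow_coprime m hN
  have hcop₁₂ : n₁.Coprime n₂ := Nat.Coprime.coprime_dvd_left hdvd (hcop.pow_left k)
  have hn₁ : Gamma m ≤ normalClosureTPow m ⊔ Gamma n₁ :=
    (Gamma_le_normalClosureTPow_sup_Gamma_pow m k).trans <|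
      sup_le_sup_left (Gamma_le_Gamma_of_dvd (hdvd.trans (pow_dvd_pow m k.le_succ))) _
  have htop := normalClosureTPow_inf_Gamma_sup_Gamma_eq_top (hcop.mul_left hcop₁₂)
  intro A hA
  obtain ⟨E, hE, B, hB, rfl⟩ := Subgroup.mem_sup_of_normal_right.mp (hn₁ hA)
  obtain ⟨E', hE', C, hC, rfl⟩ := Subgroup.mem_sup_of_normal_right.mp (htop ▸ Subgroup.mem_top B)
  obtain ⟨hE'm, hE'n₁⟩ := Subgroup.mem_inf.mp hE'
  have hCN : C ∈ Gamma (n₁ * n₂) :=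
    Gamma_inf_Gamma_le hcop₁₂ ⟨by simpa using mul_mem (inv_mem hE'n₁) hB, hC⟩
  simpa [mul_assoc] using Subgroup.mul_mem_sup (mul_mem hE hE'm) hCN

end Wohlfahrt

open Wohlfahrt in
/-- Wohlfahrt's theorem: let `Γ` be a finite-index subgroup of `PSL₂(ℤ)`, let `w g` be the
width of the cusp `g·∞`, and let `m` be the least common multiple of all the cusp widths.
Then `Γ` is congruence if and only if `Γ̄(m) ≤ Γ`. -/
theorem wohlfahrt (Γ : Subgroup PSL2Z) (hfin : Γ.index ≠ 0) (w : PSL2Z → ℕ)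
    (hw : ∀ g : PSL2Z, IsLeast {k : ℕ | 0 < k ∧ g * projSL matT ^ k * g⁻¹ ∈ Γ} (w g))
    (m : ℕ) (hdvd : ∀ g : PSL2Z, w g ∣ m)
    (hlcm : ∀ m' : ℕ, (∀ g : PSL2Z, w g ∣ m') → m ∣ m') :
    (∃ N : ℕ, 0 < N ∧ GammaBar N ≤ Γ) ↔ GammaBar m ≤ Γ := by
  constructor
  · rintro ⟨N, hN, hΓN⟩
    have hconj (g : PSL2Z) : g * projSL matT ^ m * g⁻¹ ∈ Γ := by
      obtain ⟨c, hc⟩ := hdvd g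
      rw [hc, pow_mul, ← conj_pow]
      exact pow_mem (hw g).1.2 c
    have hE : normalClosureTPow m ≤ Γ.comap projSL := normalClosure_singleton_le fun g => by
      simp only [Subgroup.mem_comap, map_mul, map_inv, map_pow]
      exact hconj (projSL g)
    rw [GammaBar, Subgroup.map_le_iff_le_comap] at hΓN ⊢
    exact (Gamma_le_normalClosureTPow_sup_Gamma m hN.ne').trans (sup_le hE hΓN)
  · refine fun h => ⟨m, Nat.pos_of_ne_zero fun hm => ?_, h⟩
    have : Γ.FiniteIndex := Subgroup.finiteIndex_iff.mpr hfin
    have hcore (g : PSL2Z) : w g ∣ Γ.normalCore.index :=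
      dvd_of_isLeast_pow_mem (x := g * projSL matT * g⁻¹) (by simpa only [conj_pow] using hw g)
        (Γ.normalCore_le (Γ.normalCore.pow_index_mem _))
    exact Subgroup.FiniteIndex.index_ne_zero (zero_dvd_iff.mp (hm ▸ hlcm _ hcore))
end
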